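/- arXiv:1611.05059 — 5 statements merged into one kernel-verified Lean document; each statement's English description precedes it below -/
import Mathlib

section
/- The number of permutations of length n avoiding all three patterns 123, 213, and 132 equals the n-th Fibonacci number; equivalently, if s_n denotes this count, then s_0 = s_1 = 1 and s_n = s_{n-1} + s_{n-2} for all n ≥ 2. -/
/-- `π` contains the pattern `σ`: some subsequence of `π` has the same relative
order as `σ`. -/
def Contains {n k : ℕ} (π : Fin n → Fin n) (σ : Fin k → Fin k) : Prop :=
  ∃ f : Fin k → Fin n, StrictMono f ∧ ∀ a b : Fin k, σ a < σ b ↔ π (f a) < π (f b)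

/-- `π` avoids the pattern `σ`. -/
def Avoids {n k : ℕ} (π : Fin n → Fin n) (σ : Fin k → Fin k) : Prop :=
  ¬ Contains π σ

/-- The number of permutations of length `n` avoiding all of the patterns
123, 213 and 132. -/
noncomputable def avCount (n : ℕ) : ℕ :=
  Nat.card {π : Fin n → Fin n // Function.Bijective π ∧
    Avoids π (![0, 1, 2] : Fin 3 → Fin 3) ∧ Avoids π (![1, 0, 2] : Fin 3 → Fin 3) ∧
    Avoids π (![0, 2, 1] : Fin 3 → Fin 3)}

/-- Structural characterization: every entry two or more places later is smaller. -/
def Good (n : ℕ) (π : Fin n → Fin n) : Prop :=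
  Function.Bijective π ∧ ∀ i j : Fin n, (i : ℕ) + 2 ≤ (j : ℕ) → π j < π i

lemma avoids_iff {n : ℕ} (π : Fin n → Fin n) (hb : Function.Bijective π) :
    (Avoids π (![0, 1, 2] : Fin 3 → Fin 3) ∧ Avoids π (![1, 0, 2] : Fin 3 → Fin 3) ∧
      Avoids π (![0, 2, 1] : Fin 3 → Fin 3)) ↔
    ∀ i j : Fin n, (i : ℕ) + 2 ≤ (j : ℕ) → π j < π i := by
  constructor
  · rintro ⟨h1, h2, h3⟩ i j hij
    by_contra hc
    have hne : π j ≠ π i := fun h => by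
      have := congrArg Fin.val (hb.injective h)
      omega
    have hlt : (π i : ℕ) < (π j : ℕ) := by
      rcases Nat.lt_or_ge (π i : ℕ) (π j : ℕ) with h | h
      · exact h
      · exfalso
        rcases Nat.eq_or_lt_of_le h with h' | h'
        · exact hne (Fin.ext h')
        · exact hc (Fin.lt_def.mpr h')
    have hjn : (i : ℕ) + 1 < n := by have := j.isLt; omega
    obtain ⟨m, hm⟩ : ∃ m : Fin n, (m : ℕ) = (i : ℕ) + 1 := ⟨⟨(i : ℕ) + 1, hjn⟩, rfl⟩
    have hmlt : i < m := by rw [Fin.lt_def]; omega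
    have hmjlt : m < j := by rw [Fin.lt_def]; omega
    have hsm : StrictMono (![i, m, j] : Fin 3 → Fin n) := by
      intro a b hab
      fin_cases a <;> fin_cases b <;>
        first
          | exact absurd hab (by omega : ¬((0:ℕ) < 0))
          | exact absurd hab (by omega : ¬((1:ℕ) < 1))
          | exact absurd hab (by omega : ¬((2:ℕ) < 2))
          | exact absurd hab (by omega : ¬((1:ℕ) < 0))
          | exact absurd hab (by omega : ¬((2:ℕ) < 0))
          | exact absurd hab (by omega : ¬((2:ℕ) < 1))
          | exact hmlt
          | exact hmjlt
          | exact hmlt.trans hmjlt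
    have hmi : (π m : ℕ) ≠ (π i : ℕ) := fun h => by
      have := congrArg Fin.val (hb.injective (Fin.ext h : π m = π i))
      omega
    have hmj : (π m : ℕ) ≠ (π j : ℕ) := fun h => by
      have := congrArg Fin.val (hb.injective (Fin.ext h : π m = π j))
      omega
    have main : ∀ σ : Fin 3 → Fin 3, Avoids π σ →
        ¬ (∀ a b : Fin 3, σ a < σ b ↔ π (![i, m, j] a) < π (![i, m, j] b)) :=
      fun σ hσ hiff => hσ ⟨![i, m, j], hsm, hiff⟩
    rcases lt_trichotomy ((π m : ℕ)) ((π i : ℕ)) with hmi' | hmi' | hmi'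
    · refine main _ h2 fun a b => ?_
      fin_cases a <;> fin_cases b <;>
        first
          | (refine iff_of_true ?_ ?_ <;>
              first
                | exact (by omega : (0:ℕ) < 1)
                | exact (by omega : (0:ℕ) < 2)
                | exact (by omega : (1:ℕ) < 2)
                | exact (show π i < π m from Fin.lt_def.mpr (by omega))
                | exact (show π i < π j from Fin.lt_def.mpr (by omega))
                | exact (show π m < π i from Fin.lt_def.mpr (by omega))
                | exact (show π m < π j from Fin.lt_def.mpr (by omega))
                | exact (show π j < π i from Fin.lt_def.mpr (by omega))
                | exact (show π j < π m from Fin.lt_def.mpr (by omega)))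
          | (refine iff_of_false ?_ ?_ <;>
              first
                | exact (by omega : ¬((0:ℕ) < 0))
                | exact (by omega : ¬((1:ℕ) < 1))
                | exact (by omega : ¬((2:ℕ) < 2))
                | exact (by omega : ¬((1:ℕ) < 0))
                | exact (by omega : ¬((2:ℕ) < 0))
                | exact (by omega : ¬((2:ℕ) < 1))
                | (intro hl; first
                    | exact absurd (Fin.lt_def.mp (id hl : π i < π i)) (by omega)
                    | exact absurd (Fin.lt_def.mp (id hl : π m < π m)) (by omega)
                    | exact absurd (Fin.lt_def.mp (id hl : π j < π j)) (by omega)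
                    | exact absurd (Fin.lt_def.mp (id hl : π i < π m)) (by omega)
                    | exact absurd (Fin.lt_def.mp (id hl : π i < π j)) (by omega)
                    | exact absurd (Fin.lt_def.mp (id hl : π m < π i)) (by omega)
                    | exact absurd (Fin.lt_def.mp (id hl : π m < π j)) (by omega)
                    | exact absurd (Fin.lt_def.mp (id hl : π j < π i)) (by omega)
                    | exact absurd (Fin.lt_def.mp (id hl : π j < π m)) (by omega)))
    · exact absurd hmi' hmi
    · rcases lt_trichotomy ((π m : ℕ)) ((π j : ℕ)) with hmj' | hmj' | hmj'
      · refine main _ h1 fun a b => ?_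
        fin_cases a <;> fin_cases b <;>
          first
            | (refine iff_of_true ?_ ?_ <;>
                first
                  | exact (by omega : (0:ℕ) < 1)
                  | exact (by omega : (0:ℕ) < 2)
                  | exact (by omega : (1:ℕ) < 2)
                  | exact (show π i < π m from Fin.lt_def.mpr (by omega))
                  | exact (show π i < π j from Fin.lt_def.mpr (by omega))
                  | exact (show π m < π i from Fin.lt_def.mpr (by omega))
                  | exact (show π m < π j from Fin.lt_def.mpr (by omega))
                  | exact (show π j < π i from Fin.lt_def.mpr (by omega))
                  | exact (show π j < π m from Fin.lt_def.mpr (by omega)))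
            | (refine iff_of_false ?_ ?_ <;>
                first
                  | exact (by omega : ¬((0:ℕ) < 0))
                  | exact (by omega : ¬((1:ℕ) < 1))
                  | exact (by omega : ¬((2:ℕ) < 2))
                  | exact (by omega : ¬((1:ℕ) < 0))
                  | exact (by omega : ¬((2:ℕ) < 0))
                  | exact (by omega : ¬((2:ℕ) < 1))
                  | (intro hl; first
                      | exact absurd (Fin.lt_def.mp (id hl : π i < π i)) (by omega)
                      | exact absurd (Fin.lt_def.mp (id hl : π m < π m)) (by omega)
                      | exact absurd (Fin.lt_def.mp (id hl : π j < π j)) (by omega)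
                      | exact absurd (Fin.lt_def.mp (id hl : π i < π m)) (by omega)
                      | exact absurd (Fin.lt_def.mp (id hl : π i < π j)) (by omega)
                      | exact absurd (Fin.lt_def.mp (id hl : π m < π i)) (by omega)
                      | exact absurd (Fin.lt_def.mp (id hl : π m < π j)) (by omega)
                      | exact absurd (Fin.lt_def.mp (id hl : π j < π i)) (by omega)
                      | exact absurd (Fin.lt_def.mp (id hl : π j < π m)) (by omega)))
      · exact absurd hmj' hmj
      · refine main _ h3 fun a b => ?_
        fin_cases a <;> fin_cases b <;>
          first
            | (refine iff_of_true ?_ ?_ <;>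
                first
                  | exact (by omega : (0:ℕ) < 1)
                  | exact (by omega : (0:ℕ) < 2)
                  | exact (by omega : (1:ℕ) < 2)
                  | exact (show π i < π m from Fin.lt_def.mpr (by omega))
                  | exact (show π i < π j from Fin.lt_def.mpr (by omega))
                  | exact (show π m < π i from Fin.lt_def.mpr (by omega))
                  | exact (show π m < π j from Fin.lt_def.mpr (by omega))
                  | exact (show π j < π i from Fin.lt_def.mpr (by omega))
                  | exact (show π j < π m from Fin.lt_def.mpr (by omega)))
            | (refine iff_of_false ?_ ?_ <;>
                first
                  | exact (by omega : ¬((0:ℕ) < 0))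
                  | exact (by omega : ¬((1:ℕ) < 1))
                  | exact (by omega : ¬((2:ℕ) < 2))
                  | exact (by omega : ¬((1:ℕ) < 0))
                  | exact (by omega : ¬((2:ℕ) < 0))
                  | exact (by omega : ¬((2:ℕ) < 1))
                  | (intro hl; first
                      | exact absurd (Fin.lt_def.mp (id hl : π i < π i)) (by omega)
                      | exact absurd (Fin.lt_def.mp (id hl : π m < π m)) (by omega)
                      | exact absurd (Fin.lt_def.mp (id hl : π j < π j)) (by omega)
                      | exact absurd (Fin.lt_def.mp (id hl : π i < π m)) (by omega)
                      | exact absurd (Fin.lt_def.mp (id hl : π i < π j)) (by omega)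
                      | exact absurd (Fin.lt_def.mp (id hl : π m < π i)) (by omega)
                      | exact absurd (Fin.lt_def.mp (id hl : π m < π j)) (by omega)
                      | exact absurd (Fin.lt_def.mp (id hl : π j < π i)) (by omega)
                      | exact absurd (Fin.lt_def.mp (id hl : π j < π m)) (by omega)))
  · intro h
    have key : ∀ σ : Fin 3 → Fin 3, σ 0 < σ 2 → Avoids π σ := by
      rintro σ hσ ⟨f, hf, hiff⟩
      have h02 : π (f 0) < π (f 2) := (hiff 0 2).mp hσ
      have h01 : f 0 < f 1 := hf (show (0 : Fin 3) < 1 from (by omega : (0:ℕ) < 1))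
      have h12 : f 1 < f 2 := hf (show (1 : Fin 3) < 2 from (by omega : (1:ℕ) < 2))
      have hfv : (f 0 : ℕ) + 2 ≤ (f 2 : ℕ) := by
        have a := Fin.lt_def.mp h01; have b := Fin.lt_def.mp h12; omega
      exact absurd (h (f 0) (f 2) hfv) (not_lt.mpr h02.le)
    exact ⟨key _ ((by omega : (0:ℕ) < 2)), key _ ((by omega : (1:ℕ) < 2)),
      key _ ((by omega : (0:ℕ) < 1))⟩

lemma avCount_eq_good (n : ℕ) :
    avCount n = Nat.card {π : Fin n → Fin n // Good n π} := by
  apply Nat.card_congr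
  apply Equiv.subtypeEquivRight
  intro π
  constructor
  · rintro ⟨hb, h⟩; exact ⟨hb, (avoids_iff π hb).mp h⟩
  · rintro ⟨hb, h⟩; exact ⟨hb, (avoids_iff π hb).mpr h⟩

/-- Extend by putting the new maximum first. -/
def ext1 {n : ℕ} (π : Fin (n + 1) → Fin (n + 1)) : Fin (n + 2) → Fin (n + 2) :=
  Fin.cases (Fin.last (n + 1)) (fun i => (π i).castSucc)

/-- Extend by putting the second maximum first and the maximum second. -/
def ext2 {n : ℕ} (π : Fin n → Fin n) : Fin (n + 2) → Fin (n + 2) :=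
  Fin.cases ((Fin.last n).castSucc)
    (Fin.cases (Fin.last (n + 1)) (fun i => ((π i).castSucc).castSucc))

lemma ext1_zero {n : ℕ} (π : Fin (n + 1) → Fin (n + 1)) : ext1 π 0 = Fin.last (n + 1) := rfl
lemma ext1_succ {n : ℕ} (π : Fin (n + 1) → Fin (n + 1)) (i : Fin (n + 1)) :
    ext1 π i.succ = (π i).castSucc := by simp [ext1]
lemma ext2_zero {n : ℕ} (π : Fin n → Fin n) : ext2 π 0 = (Fin.last n).castSucc := rfl
lemma ext2_succ_zero {n : ℕ} (π : Fin n → Fin n) :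
    ext2 π (0 : Fin (n + 1)).succ = Fin.last (n + 1) := by
  simp only [ext2, Fin.cases_succ, Fin.cases_zero]
lemma ext2_succ_succ {n : ℕ} (π : Fin n → Fin n) (i : Fin n) :
    ext2 π i.succ.succ = ((π i).castSucc).castSucc := by simp [ext2]

lemma good_ext1 {n : ℕ} {π : Fin (n + 1) → Fin (n + 1)} (h : Good (n + 1) π) :
    Good (n + 2) (ext1 π) := by
  constructor
  · rw [← Finite.injective_iff_bijective]
    intro a b hab
    induction a using Fin.cases with
    | zero =>
      induction b using Fin.cases with
      | zero => rfl
      | succ b =>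
        rw [ext1_zero, ext1_succ] at hab
        exact absurd hab.symm (Fin.castSucc_lt_last _).ne
    | succ a =>
      induction b using Fin.cases with
      | zero =>
        rw [ext1_zero, ext1_succ] at hab
        exact absurd hab (Fin.castSucc_lt_last _).ne
      | succ b =>
        rw [ext1_succ, ext1_succ] at hab
        exact congrArg Fin.succ (h.1.injective (Fin.castSucc_injective _ hab))
  · intro i j hij
    induction i using Fin.cases with
    | zero =>
      induction j using Fin.cases with
      | zero => simp at hij
      | succ j => rw [ext1_zero, ext1_succ]; exact Fin.castSucc_lt_last _
    | succ i =>
      induction j using Fin.cases with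
      | zero => simp [Fin.val_succ] at hij
      | succ j =>
        rw [ext1_succ, ext1_succ, Fin.castSucc_lt_castSucc_iff]
        apply h.2
        simp [Fin.val_succ] at hij ⊢; omega

lemma good_ext2 {n : ℕ} {π : Fin n → Fin n} (h : Good n π) :
    Good (n + 2) (ext2 π) := by
  have hlt : ∀ i : Fin n, ((π i).castSucc).castSucc < (Fin.last n).castSucc := by
    intro i
    rw [Fin.castSucc_lt_castSucc_iff]
    exact Fin.castSucc_lt_last _
  constructor
  · rw [← Finite.injective_iff_bijective]
    intro a b hab
    induction a using Fin.cases with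
    | zero =>
      induction b using Fin.cases with
      | zero => rfl
      | succ b =>
        induction b using Fin.cases with
        | zero =>
          rw [ext2_zero] at hab
          rw [ext2_succ_zero] at hab
          exact absurd hab (Fin.castSucc_lt_last _).ne
        | succ b =>
          rw [ext2_zero, ext2_succ_succ] at hab
          exact absurd hab.symm (hlt b).ne
    | succ a =>
      induction b using Fin.cases with
      | zero =>
        induction a using Fin.cases with
        | zero =>
          rw [ext2_succ_zero, ext2_zero] at hab
          exact absurd hab.symm (Fin.castSucc_lt_last _).ne
        | succ a =>
          rw [ext2_succ_succ, ext2_zero] at hab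
          exact absurd hab (hlt a).ne
      | succ b =>
        induction a using Fin.cases with
        | zero =>
          induction b using Fin.cases with
          | zero => rfl
          | succ b =>
            rw [ext2_succ_zero, ext2_succ_succ] at hab
            exact absurd hab.symm ((hlt b).trans (Fin.castSucc_lt_last _)).ne
        | succ a =>
          induction b using Fin.cases with
          | zero =>
            rw [ext2_succ_zero, ext2_succ_succ] at hab
            exact absurd hab ((hlt a).trans (Fin.castSucc_lt_last _)).ne
          | succ b =>
            rw [ext2_succ_succ, ext2_succ_succ] at hab
            have := h.1.injective (Fin.castSucc_injective _ (Fin.castSucc_injective _ hab))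
            rw [this]
  · intro i j hij
    induction i using Fin.cases with
    | zero =>
      induction j using Fin.cases with
      | zero => simp at hij
      | succ j =>
        induction j using Fin.cases with
        | zero => simp [Fin.val_succ] at hij
        | succ j =>
          rw [ext2_zero, ext2_succ_succ]
          exact hlt j
    | succ i =>
      induction j using Fin.cases with
      | zero => simp [Fin.val_succ] at hij
      | succ j =>
        induction i using Fin.cases with
        | zero =>
          induction j using Fin.cases with
          | zero => simp [Fin.val_succ] at hij
          | succ j =>
            rw [ext2_succ_zero, ext2_succ_succ]
            exact (hlt j).trans (Fin.castSucc_lt_last _)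
        | succ i =>
          induction j using Fin.cases with
          | zero => simp [Fin.val_succ] at hij
          | succ j =>
            rw [ext2_succ_succ, ext2_succ_succ,
              Fin.castSucc_lt_castSucc_iff, Fin.castSucc_lt_castSucc_iff]
            apply h.2
            simp [Fin.val_succ] at hij ⊢; omega

/-- The combined extension map. -/
def F (n : ℕ) :
    ({π : Fin (n + 1) → Fin (n + 1) // Good (n + 1) π} ⊕ {π : Fin n → Fin n // Good n π}) →
      {π : Fin (n + 2) → Fin (n + 2) // Good (n + 2) π}
  | .inl ⟨π, h⟩ => ⟨ext1 π, good_ext1 h⟩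
  | .inr ⟨π, h⟩ => ⟨ext2 π, good_ext2 h⟩

lemma F_bijective (n : ℕ) : Function.Bijective (F n) := by
  constructor
  · rintro (⟨π, hπ⟩ | ⟨π, hπ⟩) (⟨ρ, hρ⟩ | ⟨ρ, hρ⟩) hab <;>
      simp only [F, Subtype.mk.injEq] at hab
    · have : π = ρ := by
        funext i
        have := congrFun hab i.succ
        rw [ext1_succ, ext1_succ] at this
        exact Fin.castSucc_injective _ this
      simp [this]
    · exfalso
      have := congrFun hab (0 : Fin (n + 1)).succ
      rw [ext1_succ, ext2_succ_zero] at this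
      exact absurd this (Fin.castSucc_lt_last _).ne
    · exfalso
      have := congrFun hab (0 : Fin (n + 1)).succ
      rw [ext1_succ, ext2_succ_zero] at this
      exact absurd this.symm (Fin.castSucc_lt_last _).ne
    · have : π = ρ := by
        funext i
        have := congrFun hab i.succ.succ
        rw [ext2_succ_succ, ext2_succ_succ] at this
        exact Fin.castSucc_injective _ (Fin.castSucc_injective _ this)
      simp [this]
  · rintro ⟨ρ, hρb, hρo⟩
    by_cases h0 : ρ 0 = Fin.last (n + 1)
    · -- comes from ext1
      have hne : ∀ i : Fin (n + 1), ρ i.succ ≠ Fin.last (n + 1) := by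
        intro i h
        have := hρb.injective (h.trans h0.symm)
        exact absurd (congrArg Fin.val this) (by simp)
      refine ⟨.inl ⟨fun i => (ρ i.succ).castPred (hne i), ?_, ?_⟩, ?_⟩
      · rw [← Finite.injective_iff_bijective]
        intro a b hab
        have : ρ a.succ = ρ b.succ := by
          have := congrArg Fin.castSucc hab
          rwa [Fin.castSucc_castPred, Fin.castSucc_castPred] at this
        exact Fin.succ_injective _ (hρb.injective this)
      · intro i j hij
        rw [Fin.lt_def]
        simp only [Fin.coe_castPred]
        have := hρo i.succ j.succ (by simp [Fin.val_succ]; omega)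
        exact this
      · simp only [F]
        congr 1
        funext i
        induction i using Fin.cases with
        | zero => rw [ext1_zero, h0]
        | succ i => rw [ext1_succ, Fin.castSucc_castPred]
    · -- comes from ext2
      obtain ⟨m, hm⟩ := hρb.surjective (Fin.last (n + 1))
      have hm1 : m = 1 := by
        have hm0 : m ≠ 0 := fun h => h0 (h ▸ hm)
        have h2m : ¬ (2 ≤ (m : ℕ)) := by
          intro h2
          have := hρo 0 m (by rw [Fin.val_zero]; omega)
          rw [hm] at this
          exact absurd (Fin.le_last (ρ 0)) (not_le.mpr this)
        have hv0 : (m : ℕ) ≠ 0 := fun h => hm0 (Fin.ext (by rw [h, Fin.val_zero]))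
        exact Fin.ext (by rw [Fin.val_one]; omega)
      have h1 : ρ 1 = Fin.last (n + 1) := hm1 ▸ hm
      have h0v : (ρ 0 : ℕ) = n := by
        have hle : (ρ 0 : ℕ) ≤ n := by
          have := (ρ 0).isLt
          have : (ρ 0 : ℕ) ≠ n + 1 := fun h => h0 (Fin.ext (by simp [h]))
          omega
        obtain ⟨m', hm'⟩ := hρb.surjective ⟨n, by omega⟩
        rcases Nat.lt_or_ge (m' : ℕ) 2 with hm'2 | hm'2
        · interval_cases hv : (m' : ℕ)
          · have : m' = 0 := Fin.ext (by simp [hv])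
            rw [this] at hm'
            rw [hm']
          · have : m' = 1 := Fin.ext (by simp [hv])
            rw [this, h1] at hm'
            exact absurd (congrArg Fin.val hm') (by simp)
        · have := hρo 0 m' (by simpa using hm'2)
          rw [hm'] at this
          have : n < (ρ 0 : ℕ) := this
          omega
      have hlt2 : ∀ i : Fin n, (ρ i.succ.succ : ℕ) < n := by
        intro i
        have := hρo 0 i.succ.succ (by simp [Fin.val_succ])
        rw [Fin.lt_def, h0v] at this
        exact this
      refine ⟨.inr ⟨fun i => (ρ i.succ.succ).castLT (hlt2 i), ?_, ?_⟩, ?_⟩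
      · rw [← Finite.injective_iff_bijective]
        intro a b hab
        have hv := congrArg Fin.val hab
        simp only [Fin.coe_castLT] at hv
        exact Fin.succ_injective _ (Fin.succ_injective _ (hρb.injective (Fin.ext hv)))
      · intro i j hij
        rw [Fin.lt_def]
        simp only [Fin.coe_castLT]
        exact hρo i.succ.succ j.succ.succ (by simp [Fin.val_succ]; omega)
      · simp only [F]
        congr 1
        funext i
        induction i using Fin.cases with
        | zero =>
          rw [ext2_zero]
          exact (Fin.ext (by simp [h0v])).symm
        | succ i =>
          induction i using Fin.cases with
          | zero =>
            have e1 : (Fin.succ 0 : Fin (n + 2)) = 1 := Fin.ext (by simp)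
            rw [ext2_succ_zero, e1, h1]
          | succ i =>
            rw [ext2_succ_succ]
            exact Fin.ext (by simp)

lemma card_good : ∀ n : ℕ, Nat.card {π : Fin n → Fin n // Good n π} = Nat.fib (n + 1) := by
  intro n
  induction n using Nat.strong_induction_on with
  | _ n ih =>
    match n with
    | 0 =>
      have : Unique {π : Fin 0 → Fin 0 // Good 0 π} := by
        refine ⟨⟨⟨fun i => i, Function.bijective_id, fun i j _ => i.elim0⟩⟩, ?_⟩
        rintro ⟨π, hπ⟩
        exact Subtype.ext (funext fun i => i.elim0)
      simp [Nat.card_unique]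
    | 1 =>
      have : Unique {π : Fin 1 → Fin 1 // Good 1 π} := by
        refine ⟨⟨⟨fun i => i, Function.bijective_id, fun i j h => by
          have := i.isLt; have := j.isLt; omega⟩⟩, ?_⟩
        rintro ⟨π, hπ⟩
        exact Subtype.ext (funext fun i => Subsingleton.elim _ _)
      simp [Nat.card_unique]
    | (m + 2) =>
      have hcongr := Nat.card_congr (Equiv.ofBijective _ (F_bijective m))
      rw [Nat.card_sum] at hcongr
      rw [← hcongr, ih (m + 1) (by omega), ih m (by omega)]
      have hfib : Nat.fib (m + 3) = Nat.fib (m + 1) + Nat.fib (m + 2) :=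
        Nat.fib_add_two (n := m + 1)
      show Nat.fib (m + 2) + Nat.fib (m + 1) = Nat.fib (m + 3)
      omega

/-- The number of permutations of length `n` in `Av(123, 213, 132)` is the `n`-th
Fibonacci number: it satisfies `s 0 = s 1 = 1` and `s n = s (n-1) + s (n-2)`. -/
theorem stmt0 :
    (∀ n : ℕ, avCount n = Nat.fib (n + 1)) ∧
    avCount 0 = 1 ∧ avCount 1 = 1 ∧
    ∀ n : ℕ, 2 ≤ n → avCount n = avCount (n - 1) + avCount (n - 2) := by
  have key : ∀ n : ℕ, avCount n = Nat.fib (n + 1) := fun n =>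
    (avCount_eq_good n).trans (card_good n)
  refine ⟨key, by simp [key], by simp [key], ?_⟩
  intro n hn
  obtain ⟨m, rfl⟩ : ∃ m, n = m + 2 := ⟨n - 2, by omega⟩
  simp only [key, Nat.add_sub_cancel]
  rw [show m + 2 - 1 = m + 1 by omega, show m + 2 + 1 = (m + 1) + 2 by ring,
    Nat.fib_add_two]
  ring
end

section
/- A permutation π in Av(4123,4213,4132) is skew-decomposable if and only if π = τ ⊖ 1 or π = ρ ⊖ 12 for some nonempty permutations τ, ρ (necessarily in Av(4123,4213,4132)). -/
/-- The skew sum `σ ⊖ τ` of a permutation of length `p` and one of length `q`: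
`(σ ⊖ τ)(i) = σ(i) + q` for `i < p`, and `(σ ⊖ τ)(p + j) = τ(j)`. -/
def skewSum {p q : ℕ} (σ : Fin p → Fin p) (τ : Fin q → Fin q) (i : Fin (p + q)) :
    Fin (p + q) :=
  if h : (i : ℕ) < p then
    ⟨(σ ⟨(i : ℕ), h⟩ : ℕ) + q, by have hlt := (σ ⟨(i : ℕ), h⟩).isLt; omega⟩
  else
    Fin.castLE (Nat.le_add_left q p) (τ ⟨(i : ℕ) - p, by have hi := i.isLt; omega⟩)

/-- `π` is skew-decomposable: it is a skew sum of two nonempty permutations. -/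
def IsSkewDecomposable {n : ℕ} (π : Fin n → Fin n) : Prop :=
  ∃ (p q : ℕ) (h : p + q = n) (σ : Fin p → Fin p) (τ : Fin q → Fin q),
    0 < p ∧ 0 < q ∧ Function.Bijective σ ∧ Function.Bijective τ ∧
    ∀ i : Fin (p + q), π (Fin.cast h i) = Fin.cast h (skewSum σ τ i)

lemma fin4_mk2 {h : 2 < 4} : (⟨2, h⟩ : Fin 4) = 2 := rfl
lemma fin4_mk3 {h : 3 < 4} : (⟨3, h⟩ : Fin 4) = 3 := rfl

lemma contains_of_sub {n m k : ℕ} (π : Fin n → Fin n) (ρ : Fin m → Fin m)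
    (g : Fin m → Fin n) (hg : StrictMono g) {σ : Fin k → Fin k}
    (hord : ∀ a b, ρ a < ρ b ↔ π (g a) < π (g b)) :
    Contains ρ σ → Contains π σ := by
  rintro ⟨f, hf, hfo⟩
  exact ⟨g ∘ f, hg.comp hf, fun a b => (hfo a b).trans (hord _ _)⟩

section Gadgets
variable {n : ℕ} (π : Fin n → Fin n) (i0 i1 im i2 : Fin n)

set_option maxRecDepth 8000 in
lemma gadget1
    (h01 : (i0:ℕ) < i1) (h1m : (i1:ℕ) < im) (hm2 : (im:ℕ) < i2)
    (ht1 : (π i1 : ℕ) < π i0) (htm : (π im : ℕ) < π i0) (ht2 : (π i2 : ℕ) < π i0)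
    (hab : (π i1 : ℕ) < π im) (hbc : (π im : ℕ) < π i2) :
    Contains π (![3, 0, 1, 2] : Fin 4 → Fin 4) := by
  refine ⟨![i0, i1, im, i2], ?_, ?_⟩
  · intro a b hlt
    rw [Fin.lt_def] at hlt
    fin_cases a <;> fin_cases b <;>
      simp only [fin4_mk2, fin4_mk3, Fin.mk_zero, Fin.mk_one, Fin.lt_def, Matrix.cons_val_zero,
        Matrix.cons_val_one, Matrix.head_cons, Matrix.cons_val_two, Matrix.tail_cons,
        Matrix.cons_val_three, Fin.val_zero, Fin.val_one] at hlt ⊢ <;> omega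
  · intro a b
    fin_cases a <;> fin_cases b <;>
      simp only [fin4_mk2, fin4_mk3, Fin.mk_zero, Fin.mk_one, Fin.lt_def, Matrix.cons_val_zero,
        Matrix.cons_val_one, Matrix.head_cons, Matrix.cons_val_two, Matrix.tail_cons,
        Matrix.cons_val_three, Fin.val_zero, Fin.val_one,
        show ((2:Fin 4):ℕ) = 2 from rfl, show ((3:Fin 4):ℕ) = 3 from rfl] <;> omega

set_option maxRecDepth 8000 in
lemma gadget2
    (h01 : (i0:ℕ) < i1) (h1m : (i1:ℕ) < im) (hm2 : (im:ℕ) < i2)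
    (ht1 : (π i1 : ℕ) < π i0) (htm : (π im : ℕ) < π i0) (ht2 : (π i2 : ℕ) < π i0)
    (hba : (π im : ℕ) < π i1) (hac : (π i1 : ℕ) < π i2) :
    Contains π (![3, 1, 0, 2] : Fin 4 → Fin 4) := by
  refine ⟨![i0, i1, im, i2], ?_, ?_⟩
  · intro a b hlt
    rw [Fin.lt_def] at hlt
    fin_cases a <;> fin_cases b <;>
      simp only [fin4_mk2, fin4_mk3, Fin.mk_zero, Fin.mk_one, Fin.lt_def, Matrix.cons_val_zero,
        Matrix.cons_val_one, Matrix.head_cons, Matrix.cons_val_two, Matrix.tail_cons,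
        Matrix.cons_val_three, Fin.val_zero, Fin.val_one] at hlt ⊢ <;> omega
  · intro a b
    fin_cases a <;> fin_cases b <;>
      simp only [fin4_mk2, fin4_mk3, Fin.mk_zero, Fin.mk_one, Fin.lt_def, Matrix.cons_val_zero,
        Matrix.cons_val_one, Matrix.head_cons, Matrix.cons_val_two, Matrix.tail_cons,
        Matrix.cons_val_three, Fin.val_zero, Fin.val_one,
        show ((2:Fin 4):ℕ) = 2 from rfl, show ((3:Fin 4):ℕ) = 3 from rfl] <;> omega

set_option maxRecDepth 8000 in
lemma gadget3
    (h01 : (i0:ℕ) < i1) (h1m : (i1:ℕ) < im) (hm2 : (im:ℕ) < i2)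
    (ht1 : (π i1 : ℕ) < π i0) (htm : (π im : ℕ) < π i0) (ht2 : (π i2 : ℕ) < π i0)
    (hac : (π i1 : ℕ) < π i2) (hcb : (π i2 : ℕ) < π im) :
    Contains π (![3, 0, 2, 1] : Fin 4 → Fin 4) := by
  refine ⟨![i0, i1, im, i2], ?_, ?_⟩
  · intro a b hlt
    rw [Fin.lt_def] at hlt
    fin_cases a <;> fin_cases b <;>
      simp only [fin4_mk2, fin4_mk3, Fin.mk_zero, Fin.mk_one, Fin.lt_def, Matrix.cons_val_zero,
        Matrix.cons_val_one, Matrix.head_cons, Matrix.cons_val_two, Matrix.tail_cons,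
        Matrix.cons_val_three, Fin.val_zero, Fin.val_one] at hlt ⊢ <;> omega
  · intro a b
    fin_cases a <;> fin_cases b <;>
      simp only [fin4_mk2, fin4_mk3, Fin.mk_zero, Fin.mk_one, Fin.lt_def, Matrix.cons_val_zero,
        Matrix.cons_val_one, Matrix.head_cons, Matrix.cons_val_two, Matrix.tail_cons,
        Matrix.cons_val_three, Fin.val_zero, Fin.val_one,
        show ((2:Fin 4):ℕ) = 2 from rfl, show ((3:Fin 4):ℕ) = 3 from rfl] <;> omega

end Gadgets

def emb {n k : ℕ} (i : Fin (n - k)) : Fin n :=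
  ⟨(i : ℕ), lt_of_lt_of_le i.isLt (Nat.sub_le n k)⟩

lemma emb_strictMono {n k : ℕ} : StrictMono (emb (n := n) (k := k)) := by
  intro a b hab
  exact hab

def chop {n : ℕ} (π : Fin n → Fin n) (k : ℕ) (i : Fin (n - k)) : Fin (n - k) :=
  ⟨(π (emb i) : ℕ) - k, by have h1 := i.isLt; have h2 := (π (emb i)).isLt; omega⟩

lemma eqn_case {n k : ℕ} (π : Fin n → Fin n) (h : (n - k) + k = n)
    (hpos : ∀ i : Fin n, (i:ℕ) < n - k → k ≤ (π i : ℕ))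
    (htail : ∀ i : Fin n, n - k ≤ (i:ℕ) → (π i : ℕ) = (i:ℕ) - (n - k))
    (i : Fin (n - k + k)) :
    π (Fin.cast h i) = Fin.cast h (skewSum (chop π k) (id : Fin k → Fin k) i) := by
  apply Fin.ext
  rw [Fin.coe_cast]
  by_cases hi : (i:ℕ) < n - k
  · have hpi := hpos (Fin.cast h i) (by rw [Fin.coe_cast]; exact hi)
    simp only [skewSum, dif_pos hi]
    have hb : (chop π k ⟨(i:ℕ), hi⟩ : ℕ) = (π (Fin.cast h i) : ℕ) - k := rfl
    show (π (Fin.cast h i) : ℕ) = (chop π k ⟨(i:ℕ), hi⟩ : ℕ) + k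
    rw [hb]
    omega
  · have hpi := htail (Fin.cast h i) (by rw [Fin.coe_cast]; omega)
    rw [Fin.coe_cast] at hpi
    simp only [skewSum, dif_neg hi, Fin.coe_castLE, id]
    show (π (Fin.cast h i) : ℕ) = (i:ℕ) - (n - k)
    exact hpi

/-- A permutation `π` in `Av(4123, 4213, 4132)` is skew-decomposable if and only if
`π = τ ⊖ 1` or `π = ρ ⊖ 12` for some nonempty permutations `τ`, `ρ` (which then
necessarily lie in `Av(4123, 4213, 4132)`). -/
theorem stmt4 (n : ℕ) (π : Fin n → Fin n) (hπ : Function.Bijective π)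
    (h1 : Avoids π (![3, 0, 1, 2] : Fin 4 → Fin 4))
    (h2 : Avoids π (![3, 1, 0, 2] : Fin 4 → Fin 4))
    (h3 : Avoids π (![3, 0, 2, 1] : Fin 4 → Fin 4)) :
    IsSkewDecomposable π ↔
      ((∃ (p : ℕ) (h : p + 1 = n) (τ : Fin p → Fin p), 0 < p ∧ Function.Bijective τ ∧
          Avoids τ (![3, 0, 1, 2] : Fin 4 → Fin 4) ∧ Avoids τ (![3, 1, 0, 2] : Fin 4 → Fin 4) ∧
          Avoids τ (![3, 0, 2, 1] : Fin 4 → Fin 4) ∧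
          ∀ i : Fin (p + 1), π (Fin.cast h i) = Fin.cast h (skewSum τ (id : Fin 1 → Fin 1) i)) ∨
        (∃ (p : ℕ) (h : p + 2 = n) (ρ : Fin p → Fin p), 0 < p ∧ Function.Bijective ρ ∧
          Avoids ρ (![3, 0, 1, 2] : Fin 4 → Fin 4) ∧ Avoids ρ (![3, 1, 0, 2] : Fin 4 → Fin 4) ∧
          Avoids ρ (![3, 0, 2, 1] : Fin 4 → Fin 4) ∧
          ∀ i : Fin (p + 2), π (Fin.cast h i) = Fin.cast h (skewSum ρ (id : Fin 2 → Fin 2) i))) := by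
  constructor
  · rintro ⟨p, q, h, σ, τ, hp, hq, hσ, hτ, heq⟩
    have hn : 0 < n := by omega
    have hlow : ∀ i : Fin n, p ≤ (i:ℕ) → (π i : ℕ) < q := by
      intro i hi
      have h0 := heq ⟨(i:ℕ), by omega⟩
      have hcast : (Fin.cast h ⟨(i:ℕ), by omega⟩ : Fin n) = i := rfl
      rw [hcast] at h0
      rw [h0]
      simp only [skewSum, dif_neg (Nat.not_lt.mpr hi), Fin.coe_cast, Fin.coe_castLE]
      exact (τ _).isLt
    have hhigh : ∀ i : Fin n, (i:ℕ) < p → q ≤ (π i : ℕ) := by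
      intro i hi
      have h0 := heq ⟨(i:ℕ), by omega⟩
      have hcast : (Fin.cast h ⟨(i:ℕ), by omega⟩ : Fin n) = i := rfl
      rw [hcast] at h0
      rw [h0]
      simp only [skewSum, dif_pos hi, Fin.coe_cast]
      omega
    have key : ∀ i1 i2 : Fin n, p ≤ (i1:ℕ) → (i1:ℕ) + 2 ≤ (i2:ℕ) → (π i2 : ℕ) < (π i1 : ℕ) := by
      intro i1 i2 hp1 hlt
      by_contra hcon
      push_neg at hcon
      have hne12 : (π i1 : ℕ) ≠ (π i2 : ℕ) := by
        intro hv
        have hi : i1 = i2 := hπ.injective (Fin.ext hv)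
        have : (i1:ℕ) = (i2:ℕ) := by rw [hi]
        omega
      have hlt12 : (π i1 : ℕ) < (π i2 : ℕ) := by omega
      have hi2n := i2.isLt
      set i0 : Fin n := ⟨0, hn⟩ with hi0def
      set im : Fin n := ⟨(i1:ℕ)+1, by omega⟩ with himdef
      have hd0 : q ≤ (π i0 : ℕ) := hhigh _ (by simp [hi0def]; omega)
      have hv1 : (π i1 : ℕ) < q := hlow _ hp1
      have hvm : (π im : ℕ) < q := hlow _ (by simp [himdef]; omega)
      have hv2 : (π i2 : ℕ) < q := hlow _ (by omega)
      have hnem1 : (π im : ℕ) ≠ (π i1 : ℕ) := by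
        intro hv
        have hi := hπ.injective (Fin.ext hv)
        rw [Fin.ext_iff] at hi
        simp [himdef] at hi
      have hnem2 : (π im : ℕ) ≠ (π i2 : ℕ) := by
        intro hv
        have hi := hπ.injective (Fin.ext hv)
        rw [Fin.ext_iff] at hi
        simp [himdef] at hi
        omega
      have hpos01 : (i0:ℕ) < i1 := by simp [hi0def]; omega
      have hpos1m : (i1:ℕ) < im := by simp [himdef]
      have hposm2 : (im:ℕ) < i2 := by simp [himdef]; omega
      rcases Nat.lt_or_ge (π im : ℕ) (π i1 : ℕ) with hm1 | hm1
      · exact h2 (gadget2 π i0 i1 im i2 hpos01 hpos1m hposm2 (by omega) (by omega) (by omega)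
          hm1 hlt12)
      · have hm1' : (π i1 : ℕ) < (π im : ℕ) := by omega
        rcases Nat.lt_or_ge (π im : ℕ) (π i2 : ℕ) with hm2 | hm2
        · exact h1 (gadget1 π i0 i1 im i2 hpos01 hpos1m hposm2 (by omega) (by omega) (by omega)
            hm1' hm2)
        · have hm2' : (π i2 : ℕ) < (π im : ℕ) := by omega
          exact h3 (gadget3 π i0 i1 im i2 hpos01 hpos1m hposm2 (by omega) (by omega) (by omega)
            hlt12 hm2')
    obtain ⟨m, hm⟩ := hπ.surjective ⟨0, hn⟩
    have hmval : (π m : ℕ) = 0 := by rw [hm]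
    have hmp : p ≤ (m:ℕ) := by
      by_contra hc
      push_neg at hc
      have := hhigh m hc
      omega
    have hmn : (m:ℕ) < n := m.isLt
    have hm2' : n - 2 ≤ (m:ℕ) := by
      by_contra hc
      push_neg at hc
      have := key m ⟨n-1, by omega⟩ hmp (by show (m:ℕ) + 2 ≤ n - 1; omega)
      omega
    rcases (by omega : (m:ℕ) = n - 1 ∨ (m:ℕ) = n - 2) with hcase | hcase
    · -- Case A : the last value is 0, split off as τ ⊖ 1
      left
      have hn2 : 2 ≤ n := by omega
      have hpos : ∀ i : Fin n, (i:ℕ) < n - 1 → 1 ≤ (π i : ℕ) := by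
        intro i hi
        rcases Nat.eq_zero_or_pos (π i : ℕ) with h0 | h0
        · exfalso
          have hieq : π i = π m := by
            rw [hm]; exact Fin.ext (by simpa using h0)
          have := hπ.injective hieq
          rw [Fin.ext_iff] at this
          omega
        · exact h0
      have hord : ∀ a b : Fin (n-1), chop π 1 a < chop π 1 b ↔ π (emb a) < π (emb b) := by
        intro a b
        have ha := hpos (emb a) a.isLt
        have hb := hpos (emb b) b.isLt
        simp only [chop, Fin.lt_def]
        constructor <;> intro <;> omega
      have hinj : Function.Injective (chop π 1) := by
        intro a b hab
        rw [Fin.ext_iff] at hab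
        simp only [chop] at hab
        have ha := hpos (emb a) a.isLt
        have hb := hpos (emb b) b.isLt
        have : π (emb a) = π (emb b) := Fin.ext (by omega)
        have := hπ.injective this
        rw [Fin.ext_iff] at this
        exact Fin.ext this
      refine ⟨n - 1, by omega, chop π 1, by omega, (Finite.injective_iff_bijective).mp hinj,
        fun hc => h1 (contains_of_sub π _ emb emb_strictMono hord hc),
        fun hc => h2 (contains_of_sub π _ emb emb_strictMono hord hc),
        fun hc => h3 (contains_of_sub π _ emb emb_strictMono hord hc), ?_⟩
      have htail : ∀ i : Fin n, n - 1 ≤ (i:ℕ) → (π i : ℕ) = (i:ℕ) - (n - 1) := by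
        intro i hi
        have hie : (i:ℕ) = n - 1 := by have := i.isLt; omega
        have hmeq : i = m := Fin.ext (by omega)
        rw [hmeq, hmval]
        omega
      exact fun i => eqn_case π _ hpos htail i
    · -- Case B : last two values are 1, 0; split off as ρ ⊖ 12
      right
      have hq2 : 2 ≤ q := by omega
      have hn3 : 3 ≤ n := by omega
      obtain ⟨m', hm'⟩ := hπ.surjective ⟨1, by omega⟩
      have hm'val : (π m' : ℕ) = 1 := by rw [hm']
      have hm'p : p ≤ (m':ℕ) := by
        by_contra hc
        push_neg at hc
        have := hhigh m' hc
        omega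
      have hm'ne : (m':ℕ) ≠ n - 2 := by
        intro hc
        have : m' = m := Fin.ext (by omega)
        rw [this] at hm'val
        omega
      have hm'eq : (m':ℕ) = n - 1 := by
        by_contra hc
        have hml := m'.isLt
        have := key m' ⟨n-1, by omega⟩ hm'p (by show (m':ℕ) + 2 ≤ n - 1; omega)
        have h0 : (π ⟨n-1, by omega⟩ : ℕ) = 0 := by omega
        have : (⟨n-1, by omega⟩ : Fin n) = m := hπ.injective (Fin.ext (by omega))
        rw [Fin.ext_iff] at this
        simp at this
        omega
      have hpos : ∀ i : Fin n, (i:ℕ) < n - 2 → 2 ≤ (π i : ℕ) := by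
        intro i hi
        have hne0 : (π i : ℕ) ≠ 0 := by
          intro h0
          have : i = m := hπ.injective (Fin.ext (by omega))
          rw [Fin.ext_iff] at this
          omega
        have hne1 : (π i : ℕ) ≠ 1 := by
          intro h0
          have : i = m' := hπ.injective (Fin.ext (by omega))
          rw [Fin.ext_iff] at this
          omega
        omega
      have hord : ∀ a b : Fin (n-2), chop π 2 a < chop π 2 b ↔ π (emb a) < π (emb b) := by
        intro a b
        have ha := hpos (emb a) a.isLt
        have hb := hpos (emb b) b.isLt
        simp only [chop, Fin.lt_def]
        constructor <;> intro <;> omega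
      have hinj : Function.Injective (chop π 2) := by
        intro a b hab
        rw [Fin.ext_iff] at hab
        simp only [chop] at hab
        have ha := hpos (emb a) a.isLt
        have hb := hpos (emb b) b.isLt
        have : π (emb a) = π (emb b) := Fin.ext (by omega)
        have := hπ.injective this
        rw [Fin.ext_iff] at this
        exact Fin.ext this
      refine ⟨n - 2, by omega, chop π 2, by omega, (Finite.injective_iff_bijective).mp hinj,
        fun hc => h1 (contains_of_sub π _ emb emb_strictMono hord hc),
        fun hc => h2 (contains_of_sub π _ emb emb_strictMono hord hc),
        fun hc => h3 (contains_of_sub π _ emb emb_strictMono hord hc), ?_⟩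
      have htail : ∀ i : Fin n, n - 2 ≤ (i:ℕ) → (π i : ℕ) = (i:ℕ) - (n - 2) := by
        intro i hi
        rcases (by have := i.isLt; omega : (i:ℕ) = n - 2 ∨ (i:ℕ) = n - 1) with hie | hie
        · have hmeq : i = m := Fin.ext (by omega)
          rw [hmeq]
          omega
        · have hmeq : i = m' := Fin.ext (by omega)
          rw [hmeq]
          omega
      exact fun i => eqn_case π _ hpos htail i
  · rintro (⟨p, hpn, τ, hp, hbij, _, _, _, heq⟩ | ⟨p, hpn, ρ, hp, hbij, _, _, _, heq⟩)
    · exact ⟨p, 1, hpn, τ, id, hp, one_pos, hbij, Function.bijective_id, heq⟩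
    · exact ⟨p, 2, hpn, ρ, id, hp, two_pos, hbij, Function.bijective_id, heq⟩
end

section
/- No simple permutation in Av(4231, 35142, 42513, 351624) has extreme pattern 3412; that is, there is no simple permutation π in this class with π(1) strictly between π⁻¹-determined least and greatest values such that the first value, the maximum, the minimum, and the last value of π (in position order) form the pattern 3412. -/
/-- The (closed) position interval `[l, u]` is a block of `π`: its image is an
interval `[a, b]` of values. -/
def IsBlock {n : ℕ} (π : Fin n → Fin n) (l u : Fin n) : Prop :=
  ∃ a b : Fin n, ∀ v : Fin n, (a ≤ v ∧ v ≤ b) ↔ ∃ i : Fin n, l ≤ i ∧ i ≤ u ∧ π i = v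

/-- A permutation is simple if its only blocks are the singletons and the whole
interval `[1, n]`; by convention the permutation `1` (and the empty one) is not
simple. -/
def IsSimple {n : ℕ} (π : Fin n → Fin n) : Prop :=
  2 ≤ n ∧ ∀ l u : Fin n, l ≤ u → IsBlock π l u → l = u ∨ ((l : ℕ) = 0 ∧ (u : ℕ) = n - 1)

/-- `π` has extreme pattern 3412: the subsequence formed by the first value, the
greatest value (at position `pd`), the least value (at position `pa`) and the last
value is order-isomorphic to 3412. -/
def Extreme3412 {n : ℕ} (π : Fin n → Fin n) : Prop :=
  ∃ (h : 4 ≤ n) (pd pa : Fin n),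
    (π pd : ℕ) = n - 1 ∧ (π pa : ℕ) = 0 ∧
    0 < (pd : ℕ) ∧ (pd : ℕ) < (pa : ℕ) ∧ (pa : ℕ) < n - 1 ∧
    0 < (π ⟨n - 1, by omega⟩ : ℕ) ∧
    (π ⟨n - 1, by omega⟩ : ℕ) < (π ⟨0, by omega⟩ : ℕ) ∧
    (π ⟨0, by omega⟩ : ℕ) < n - 1

/-- auxiliary: a function `Fin 4 → α` given by four values. -/
def pat4 {α : Type} (a b c d : α) (k : Fin 4) : α :=
  if k.val = 0 then a else if k.val = 1 then b else if k.val = 2 then c else d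

/-- auxiliary: a function `Fin 5 → α` given by five values. -/
def pat5 {α : Type} (a b c d e : α) (k : Fin 5) : α :=
  if k.val = 0 then a else if k.val = 1 then b else if k.val = 2 then c else
    if k.val = 3 then d else e

lemma hasP1 {n : ℕ} (π : Fin n → Fin n) (i0 i1 i2 i3 : Fin n)
    (p01 : (i0:ℕ) < i1) (p12 : (i1:ℕ) < i2) (p23 : (i2:ℕ) < i3)
    (v31 : (π i3:ℕ) < π i1) (v12 : (π i1:ℕ) < π i2) (v20 : (π i2:ℕ) < π i0) :
    Contains π (![3,1,2,0] : Fin 4 → Fin 4) := by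
  refine ⟨pat4 i0 i1 i2 i3, ?_, ?_⟩
  · intro a b hab
    rw [Fin.lt_def] at hab ⊢
    fin_cases a <;> fin_cases b <;> simp [pat4] at hab ⊢ <;> omega
  · intro a b
    fin_cases a <;> fin_cases b <;> simp only [pat4] <;> norm_num <;>
      first
        | exact iff_of_true (by decide) (by rw [Fin.lt_def]; omega)
        | exact iff_of_false (by decide) (by rw [Fin.lt_def]; omega)
        | (rw [Fin.lt_def]; omega)
        | (rw [Fin.le_def]; omega)

lemma hasP2 {n : ℕ} (π : Fin n → Fin n) (i0 i1 i2 i3 i4 : Fin n)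
    (p01 : (i0:ℕ) < i1) (p12 : (i1:ℕ) < i2) (p23 : (i2:ℕ) < i3) (p34 : (i3:ℕ) < i4)
    (v24 : (π i2:ℕ) < π i4) (v40 : (π i4:ℕ) < π i0)
    (v03 : (π i0:ℕ) < π i3) (v31 : (π i3:ℕ) < π i1) :
    Contains π (![2,4,0,3,1] : Fin 5 → Fin 5) := by
  refine ⟨pat5 i0 i1 i2 i3 i4, ?_, ?_⟩
  · intro a b hab
    rw [Fin.lt_def] at hab ⊢
    fin_cases a <;> fin_cases b <;> simp [pat5] at hab ⊢ <;> omega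
  · intro a b
    fin_cases a <;> fin_cases b <;> simp only [pat5] <;> norm_num <;>
      first
        | exact iff_of_true (by decide) (by rw [Fin.lt_def]; omega)
        | exact iff_of_false (by decide) (by rw [Fin.lt_def]; omega)
        | (rw [Fin.lt_def]; omega)
        | (rw [Fin.le_def]; omega)

lemma hasP3 {n : ℕ} (π : Fin n → Fin n) (i0 i1 i2 i3 i4 : Fin n)
    (p01 : (i0:ℕ) < i1) (p12 : (i1:ℕ) < i2) (p23 : (i2:ℕ) < i3) (p34 : (i3:ℕ) < i4)
    (v31 : (π i3:ℕ) < π i1) (v14 : (π i1:ℕ) < π i4)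
    (v40 : (π i4:ℕ) < π i0) (v02 : (π i0:ℕ) < π i2) :
    Contains π (![3,1,4,0,2] : Fin 5 → Fin 5) := by
  refine ⟨pat5 i0 i1 i2 i3 i4, ?_, ?_⟩
  · intro a b hab
    rw [Fin.lt_def] at hab ⊢
    fin_cases a <;> fin_cases b <;> simp [pat5] at hab ⊢ <;> omega
  · intro a b
    fin_cases a <;> fin_cases b <;> simp only [pat5] <;> norm_num <;>
      first
        | exact iff_of_true (by decide) (by rw [Fin.lt_def]; omega)
        | exact iff_of_false (by decide) (by rw [Fin.lt_def]; omega)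
        | (rw [Fin.lt_def]; omega)
        | (rw [Fin.le_def]; omega)

/-- No simple permutation in `Av(4231, 35142, 42513, 351624)` has extreme
pattern 3412. -/
theorem stmt8 :
    ¬ ∃ (n : ℕ) (π : Fin n → Fin n), Function.Bijective π ∧ IsSimple π ∧
      Avoids π (![3, 1, 2, 0] : Fin 4 → Fin 4) ∧
      Avoids π (![2, 4, 0, 3, 1] : Fin 5 → Fin 5) ∧
      Avoids π (![3, 1, 4, 0, 2] : Fin 5 → Fin 5) ∧
      Avoids π (![2, 4, 0, 5, 1, 3] : Fin 6 → Fin 6) ∧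
      Extreme3412 π := by
  rintro ⟨n, π, hbij, hsimp, hA1, hA2, hA3, -, hext⟩
  obtain ⟨h4, pd, pa, hmax, hmin, hpd0, hdpa, hpan, hd0, hdc, hcn⟩ := hext
  have hinj := hbij.injective
  set lst : Fin n := ⟨n - 1, by omega⟩ with hlst
  set z : Fin n := ⟨0, by omega⟩ with hz
  have hzval : (z : ℕ) = 0 := rfl
  have hlstval : (lst : ℕ) = n - 1 := rfl
  have hvlt : ∀ i : Fin n, (π i : ℕ) < n := fun i => (π i).isLt
  have hplt : ∀ i : Fin n, (i : ℕ) < n := fun i => i.isLt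
  have happ : ∀ i j : Fin n, (i : ℕ) = (j : ℕ) → (π i : ℕ) = (π j : ℕ) :=
    fun i j h => congrArg (fun t => (π t : ℕ)) (Fin.ext h)
  have hinj' : ∀ i j : Fin n, (π i : ℕ) = (π j : ℕ) → (i : ℕ) = (j : ℕ) := by
    intro i j h
    exact congrArg Fin.val (hinj (Fin.ext h))
  -- the minimum of π over positions ≤ pd
  obtain ⟨i₀, hi₀mem, hi₀min⟩ :=
    Finset.exists_min_image (Finset.Iic pd) (fun i => (π i : ℕ)) ⟨pd, Finset.mem_Iic.2 le_rfl⟩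
  have hi₀pd : (i₀ : ℕ) ≤ (pd : ℕ) := by
    have := Finset.mem_Iic.1 hi₀mem
    rwa [Fin.le_def] at this
  have hmle : ∀ i : Fin n, (i : ℕ) ≤ (pd : ℕ) → (π i₀ : ℕ) ≤ (π i : ℕ) := by
    intro i hi
    exact hi₀min i (Finset.mem_Iic.2 (by rwa [Fin.le_def]))
  have hmc : (π i₀ : ℕ) ≤ (π z : ℕ) := hmle z (by omega)
  -- F1': every position ≤ pd has value > d = π lst
  have hF1 : ∀ i : Fin n, (i : ℕ) ≤ (pd : ℕ) → (π lst : ℕ) < (π i : ℕ) := by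
    intro i hi
    by_contra hcon
    push_neg at hcon
    have hilst : (i : ℕ) ≠ (lst : ℕ) := by omega
    have hne : (π i : ℕ) ≠ (π lst : ℕ) := fun h => hilst (hinj' _ _ h)
    have hid : (π i : ℕ) < (π lst : ℕ) := by omega
    have hiz : (i : ℕ) ≠ 0 := by
      intro h
      have := happ i z (by omega)
      omega
    have hipd : (i : ℕ) ≠ (pd : ℕ) := by
      intro h
      have := happ i pd h
      omega
    have hipa : (i : ℕ) ≠ (pa : ℕ) := by omega
    have hpia : (π i : ℕ) ≠ 0 := by
      intro h
      exact hipa (hinj' i pa (by omega))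
    -- P3 occurrence at (z, i, pd, pa, lst)
    exact hA3 (hasP3 π z i pd pa lst (by omega) (by omega) (by omega) (by omega)
      (by omega) (by omega) (by omega) (by omega))
  have hdm : (π lst : ℕ) < (π i₀ : ℕ) := hF1 i₀ hi₀pd
  -- main claim: the set of positions with value ≥ m is downward closed
  have claim : ∀ i j : Fin n, (i : ℕ) < (j : ℕ) → (π i₀ : ℕ) ≤ (π j : ℕ) →
      (π i₀ : ℕ) ≤ (π i : ℕ) := by
    intro i j hij hj
    by_contra hcon
    push_neg at hcon
    have hipd : (pd : ℕ) < (i : ℕ) := by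
      by_contra h
      push_neg at h
      exact absurd (hmle i h) (by omega)
    have hjpa : (j : ℕ) ≠ (pa : ℕ) := by
      intro h
      have := happ j pa h
      omega
    have hjlst : (j : ℕ) < n - 1 := by
      have h1 := hplt j
      rcases eq_or_lt_of_le (by omega : (j : ℕ) ≤ n - 1) with h | h
      · exfalso
        have := happ j lst (by omega)
        omega
      · exact h
    have hjne : (π j : ℕ) ≠ (π i₀ : ℕ) := by
      intro h
      have := hinj' j i₀ h
      omega
    have hjpd' : (π j : ℕ) < n - 1 := by
      have h1 := hvlt j
      have hne : (π j : ℕ) ≠ (π pd : ℕ) := by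
        intro h
        have := hinj' j pd h
        omega
      omega
    rcases lt_or_gt_of_ne hjpa with hcase | hcase
    · -- pd < i < j < pa : P1 at (pd, i, j, pa)
      have hipa : (i : ℕ) ≠ (pa : ℕ) := by omega
      have hpi0 : (π i : ℕ) ≠ 0 := by
        intro h
        exact hipa (hinj' i pa (by omega))
      exact hA1 (hasP1 π pd i j pa (by omega) (by omega) (by omega)
        (by omega) (by omega) (by omega))
    · -- pa < j : P2 at (i₀, pd, pa, j, lst)
      have hi₀pd' : (i₀ : ℕ) < (pd : ℕ) := by
        rcases eq_or_lt_of_le hi₀pd with h | h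
        · exfalso
          have := happ i₀ pd h
          omega
        · exact h
      exact hA2 (hasP2 π i₀ pd pa j lst (by omega) (by omega) (by omega) (by omega)
        (by omega) (by omega) (by omega) (by omega))
  -- build the block
  set S := Finset.filter (fun i : Fin n => (π i₀ : ℕ) ≤ (π i : ℕ)) Finset.univ with hS
  have hSne : S.Nonempty := ⟨i₀, by simp [hS]⟩
  set u : Fin n := S.max' hSne with hu
  have humemS : u ∈ S := S.max'_mem hSne
  have humem : (π i₀ : ℕ) ≤ (π u : ℕ) := by
    rw [hS] at humemS
    exact (Finset.mem_filter.1 humemS).2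
  have hiu : ∀ i : Fin n, (π i₀ : ℕ) ≤ (π i : ℕ) ↔ i ≤ u := by
    intro i
    constructor
    · intro h
      have hmem : i ∈ S := by
        rw [hS]
        exact Finset.mem_filter.2 ⟨Finset.mem_univ _, h⟩
      have := S.le_max' i hmem
      rwa [← hu] at this
    · intro h
      rcases eq_or_lt_of_le h with h | h
      · rw [h]; exact humem
      · exact claim i u (by rwa [Fin.lt_def] at h) humem
  have hblock : IsBlock π z u := by
    refine ⟨π i₀, π pd, ?_⟩
    intro v
    constructor
    · rintro ⟨h1, h2⟩
      obtain ⟨i, hi⟩ := hbij.surjective v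
      refine ⟨i, ?_, ?_, hi⟩
      · rw [Fin.le_def]; omega
      · rw [← hiu]
        rw [Fin.le_def] at h1
        omega
    · rintro ⟨i, -, hiu', rfl⟩
      constructor
      · rw [Fin.le_def]
        exact (hiu i).2 hiu'
      · rw [Fin.le_def, hmax]
        have := hvlt i
        omega
  have hzu : z ≤ u := by
    rw [Fin.le_def]; omega
  rcases hsimp.2 z u hzu hblock with h | h
  · -- z = u : but pd ∈ S so pd ≤ u and pd > 0
    have hpdu : pd ≤ u := (hiu pd).1 (by omega)
    rw [Fin.le_def] at hpdu
    have heq : (z : ℕ) = (u : ℕ) := congrArg Fin.val h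
    omega
  · -- u = n-1 : then π u = d ≥ m, contradiction
    have heq : u = lst := Fin.ext (by omega)
    rw [heq] at humem
    omega
end

section
/- If π is a simple permutation in Av(4231, 35142, 42513, 351624) whose extreme pattern is 2413, then the graph of π is N-shaped: with b = π(1), d = max π, a = min π = some π(k), c = π(n), the values at positions in [π⁻¹(b), π⁻¹(d)] are strictly increasing, the values at positions in [π⁻¹(d), π⁻¹(a)] are strictly decreasing, and the values at positions in [π⁻¹(a), π⁻¹(c)] are strictly increasing. -/
lemma c4231 {n : ℕ} (π : Fin n → Fin n) (p1 p2 p3 p4 : Fin n)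
    (o1 : p1 < p2) (o2 : p2 < p3) (o3 : p3 < p4)
    (v1 : π p4 < π p2) (v2 : π p2 < π p3) (v3 : π p3 < π p1) :
    Contains π ![3, 1, 2, 0] := by
  have w1 := v1.trans v2
  have w2 := v2.trans v3
  have w3 := w1.trans v3
  refine ⟨fun a => match a with | 0 => p1 | 1 => p2 | 2 => p3 | 3 => p4, ?_, ?_⟩
  · intro a b hab
    fin_cases a <;> fin_cases b <;> simp_all <;>
      first
        | exact o1.trans o2
        | exact o2.trans o3
        | exact (o1.trans o2).trans o3
  · intro a b
    fin_cases a <;> fin_cases b <;>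
      constructor <;> intro h <;>
      first
        | exact absurd h (by decide)
        | assumption
        | exact absurd h (asymm v1)
        | exact absurd h (asymm v2)
        | exact absurd h (asymm v3)
        | exact absurd h (asymm w1)
        | exact absurd h (asymm w2)
        | exact absurd h (asymm w3)
        | exact absurd h (lt_irrefl _)
        | decide

lemma c35142 {n : ℕ} (π : Fin n → Fin n) (p1 p2 p3 p4 p5 : Fin n)
    (o1 : p1 < p2) (o2 : p2 < p3) (o3 : p3 < p4) (o4 : p4 < p5)
    (v1 : π p3 < π p5) (v2 : π p5 < π p1) (v3 : π p1 < π p4) (v4 : π p4 < π p2) :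
    Contains π ![2, 4, 0, 3, 1] := by
  have w1 := v1.trans v2
  have w2 := v2.trans v3
  have w3 := v3.trans v4
  have w4 := w1.trans v3
  have w5 := w2.trans v4
  have w6 := w4.trans v4
  refine ⟨fun a => match a with | 0 => p1 | 1 => p2 | 2 => p3 | 3 => p4 | 4 => p5, ?_, ?_⟩
  · intro a b hab
    fin_cases a <;> fin_cases b <;> simp_all <;>
      first
        | exact o1.trans o2
        | exact o2.trans o3
        | exact o3.trans o4
        | exact (o1.trans o2).trans o3
        | exact (o2.trans o3).trans o4
        | exact ((o1.trans o2).trans o3).trans o4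
  · intro a b
    fin_cases a <;> fin_cases b <;>
      constructor <;> intro h <;>
      first
        | exact absurd h (by decide)
        | assumption
        | exact absurd h (asymm v1)
        | exact absurd h (asymm v2)
        | exact absurd h (asymm v3)
        | exact absurd h (asymm v4)
        | exact absurd h (asymm w1)
        | exact absurd h (asymm w2)
        | exact absurd h (asymm w3)
        | exact absurd h (asymm w4)
        | exact absurd h (asymm w5)
        | exact absurd h (asymm w6)
        | exact absurd h (lt_irrefl _)
        | decide

lemma c42513 {n : ℕ} (π : Fin n → Fin n) (p1 p2 p3 p4 p5 : Fin n)
    (o1 : p1 < p2) (o2 : p2 < p3) (o3 : p3 < p4) (o4 : p4 < p5)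
    (v1 : π p4 < π p2) (v2 : π p2 < π p5) (v3 : π p5 < π p1) (v4 : π p1 < π p3) :
    Contains π ![3, 1, 4, 0, 2] := by
  have w1 := v1.trans v2
  have w2 := v2.trans v3
  have w3 := v3.trans v4
  have w4 := w1.trans v3
  have w5 := w2.trans v4
  have w6 := w4.trans v4
  refine ⟨fun a => match a with | 0 => p1 | 1 => p2 | 2 => p3 | 3 => p4 | 4 => p5, ?_, ?_⟩
  · intro a b hab
    fin_cases a <;> fin_cases b <;> simp_all <;>
      first
        | exact o1.trans o2
        | exact o2.trans o3
        | exact o3.trans o4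
        | exact (o1.trans o2).trans o3
        | exact (o2.trans o3).trans o4
        | exact ((o1.trans o2).trans o3).trans o4
  · intro a b
    fin_cases a <;> fin_cases b <;>
      constructor <;> intro h <;>
      first
        | exact absurd h (by decide)
        | assumption
        | exact absurd h (asymm v1)
        | exact absurd h (asymm v2)
        | exact absurd h (asymm v3)
        | exact absurd h (asymm v4)
        | exact absurd h (asymm w1)
        | exact absurd h (asymm w2)
        | exact absurd h (asymm w3)
        | exact absurd h (asymm w4)
        | exact absurd h (asymm w5)
        | exact absurd h (asymm w6)
        | exact absurd h (lt_irrefl _)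
        | decide

/-- If `π` is a simple permutation in `Av(4231, 35142, 42513, 351624)` with extreme
pattern 2413 (with `b = π(1)`, the greatest value `d` at position `pd`, the least
value `a` at position `pa`, and `c = π(n)`), then the graph of `π` is N-shaped:
values are strictly increasing on `[π⁻¹(b), π⁻¹(d)]`, strictly decreasing on
`[π⁻¹(d), π⁻¹(a)]`, and strictly increasing on `[π⁻¹(a), π⁻¹(c)]`. -/
theorem stmt9 (n : ℕ) (hn : 4 ≤ n) (π : Fin n → Fin n) (hπ : Function.Bijective π)
    (hs : IsSimple π)
    (h1 : Avoids π (![3, 1, 2, 0] : Fin 4 → Fin 4))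
    (h2 : Avoids π (![2, 4, 0, 3, 1] : Fin 5 → Fin 5))
    (h3 : Avoids π (![3, 1, 4, 0, 2] : Fin 5 → Fin 5))
    (h4 : Avoids π (![2, 4, 0, 5, 1, 3] : Fin 6 → Fin 6))
    (pd pa : Fin n) (hpd : (π pd : ℕ) = n - 1) (hpa : (π pa : ℕ) = 0)
    (hpd0 : 0 < (pd : ℕ)) (hpdpa : pd < pa) (hpal : (pa : ℕ) < n - 1)
    (hbc : (π ⟨0, by omega⟩ : ℕ) < (π ⟨n - 1, by omega⟩ : ℕ)) :
    (∀ i j : Fin n, i < j → j ≤ pd → π i < π j) ∧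
    (∀ i j : Fin n, pd ≤ i → i < j → j ≤ pa → π j < π i) ∧
    (∀ i j : Fin n, pa ≤ i → i < j → π i < π j) := by
  obtain ⟨hn2, hblocks⟩ := hs
  have hinj := hπ.injective
  have hpdn : (pd : ℕ) < n := pd.isLt
  have hpan : (pa : ℕ) < n := pa.isLt
  have hdpa : (pd : ℕ) < (pa : ℕ) := Fin.lt_def.mp hpdpa
  have hval : ∀ x : Fin n, (π x : ℕ) < n := fun x => (π x).isLt
  have hmax : ∀ x : Fin n, x ≠ pd → (π x : ℕ) < n - 1 := by
    intro x hx
    have h1 := hval x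
    have h2 : (π x : ℕ) ≠ n - 1 := by
      intro h
      exact hx (hinj (Fin.ext (by rw [hpd]; exact h)))
    omega
  have hmin : ∀ x : Fin n, x ≠ pa → 0 < (π x : ℕ) := by
    intro x hx
    have h2 : (π x : ℕ) ≠ 0 := by
      intro h
      exact hx (hinj (Fin.ext (by rw [hpa]; exact h)))
    omega
  -- Part B : decreasing on [pd, pa]
  have hB : ∀ i j : Fin n, pd ≤ i → i < j → j ≤ pa → π j < π i := by
    intro i j hdi hij hja
    by_contra hcon
    push_neg at hcon
    have hne : π i ≠ π j := fun h => absurd (hinj h) (Fin.ne_of_lt hij)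
    have hlt : (π i : ℕ) < (π j : ℕ) := Fin.lt_def.mp (lt_of_le_of_ne hcon hne)
    have hipd : (pd : ℕ) < (i : ℕ) := by
      rcases eq_or_lt_of_le (Fin.le_def.mp hdi) with h | h
      · exfalso
        have hi : i = pd := Fin.ext h.symm
        rw [hi] at hlt
        have := hval j
        omega
      · exact h
    have hjpa : (j : ℕ) < (pa : ℕ) := by
      rcases eq_or_lt_of_le (Fin.le_def.mp hja) with h | h
      · exfalso
        have hj : j = pa := Fin.ext h
        rw [hj] at hlt
        omega
      · exact h
    refine h1 (c4231 π pd i j pa (Fin.lt_def.mpr hipd) hij (Fin.lt_def.mpr hjpa) ?_ ?_ ?_)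
    · have := hmin i (Fin.ne_of_lt (Fin.lt_def.mpr (hjpa.trans' (Fin.lt_def.mp hij))))
      exact Fin.lt_def.mpr (by omega)
    · exact Fin.lt_def.mpr hlt
    · have := hmax j (Fin.ne_of_gt (Fin.lt_def.mpr (hipd.trans (Fin.lt_def.mp hij))))
      exact Fin.lt_def.mpr (by omega)
  -- Part A adjacency, by strong induction
  have adjA : ∀ m : ℕ, ∀ x0 x1 : Fin n, (x0 : ℕ) = m → (x1 : ℕ) = m + 1 →
      m < (pd : ℕ) → π x0 < π x1 := by
    intro m
    induction m using Nat.strong_induction_on with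
    | _ m ih =>
    intro x0 x1 hx0 hx1 hm
    by_contra hcon
    push_neg at hcon
    have hne : π x1 ≠ π x0 := by
      intro h
      have := congrArg Fin.val (hinj h)
      omega
    have hdesc : π x1 < π x0 := lt_of_le_of_ne hcon hne
    have hdescN : (π x1 : ℕ) < (π x0 : ℕ) := Fin.lt_def.mp hdesc
    have hm1pd : m + 1 < (pd : ℕ) := by
      by_contra h'
      push_neg at h'
      have hq : x1 = pd := Fin.ext (by omega)
      have : (π x1 : ℕ) = n - 1 := by rw [hq]; exact hpd
      have := hval x0
      omega
    -- monotone on [0, m]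
    have mono : ∀ y : ℕ, y ≤ m → ∀ u v : Fin n, (u : ℕ) < (v : ℕ) → (v : ℕ) = y →
        π u < π v := by
      intro y
      induction y with
      | zero => intro _ u v huv hv; omega
      | succ y ihy =>
        intro hy u v huv hv
        have step : ∀ w : Fin n, (w : ℕ) = y → π w < π v :=
          fun w hw => ih y (by omega) w v hw (by omega) (by omega)
        rcases Nat.lt_succ_iff_lt_or_eq.mp (by omega : (u : ℕ) < y + 1) with h | h
        · exact (ihy (by omega) u ⟨y, by omega⟩ (by exact h) rfl).trans (step ⟨y, by omega⟩ rfl)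
        · exact step u h
    -- the minimum of positions with value above π x1
    have hSne : (Finset.univ.filter (fun i : Fin n => π x1 < π i)).Nonempty :=
      ⟨x0, Finset.mem_filter.mpr ⟨Finset.mem_univ _, hdesc⟩⟩
    obtain ⟨k, hkS, hkmin0⟩ :=
      Finset.exists_min_image (Finset.univ.filter (fun i : Fin n => π x1 < π i)) id hSne
    have hk1 : π x1 < π k := (Finset.mem_filter.mp hkS).2
    have hkmin : ∀ i : Fin n, π x1 < π i → (k : ℕ) ≤ (i : ℕ) := fun i hi =>
      Fin.le_def.mp (hkmin0 i (Finset.mem_filter.mpr ⟨Finset.mem_univ _, hi⟩))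
    have hkx0 : (k : ℕ) ≤ (x0 : ℕ) := hkmin x0 hdesc
    have hblock : IsBlock π k x1 := by
      refine ⟨π x1, π x0, fun v => ⟨?_, ?_⟩⟩
      · rintro ⟨hv1, hv2⟩
        have hv1N := Fin.le_def.mp hv1
        have hv2N := Fin.le_def.mp hv2
        obtain ⟨i, hi⟩ : ∃ i, π i = v := hπ.surjective v
        refine ⟨i, ?_, ?_, hi⟩
        · -- k ≤ i
          rw [Fin.le_def]
          by_contra hik
          push_neg at hik
          have h2 : ¬ (π x1 < π i) := fun h => absurd (hkmin i h) (by omega)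
          have h3 : (π i : ℕ) ≤ (π x1 : ℕ) := by
            rcases lt_or_ge (π x1) (π i) with h | h
            · exact absurd h h2
            · exact Fin.le_def.mp h
          have h4 : π i = π x1 := Fin.ext (by rw [hi] at h3 ⊢; omega)
          have h5 := congrArg Fin.val (hinj h4)
          omega
        · -- i ≤ x1
          rw [Fin.le_def]
          by_contra hgt
          push_neg at hgt
          have hgtN : m + 1 < (i : ℕ) := by omega
          have hvne0 : v ≠ π x0 := by
            intro h
            have := congrArg Fin.val (hinj (hi.trans h))
            omega
          have hvne1 : v ≠ π x1 := by
            intro h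
            have := congrArg Fin.val (hinj (hi.trans h))
            omega
          have hv1' : (π x1 : ℕ) < (v : ℕ) := by
            have : (v : ℕ) ≠ (π x1 : ℕ) := fun h => hvne1 (Fin.ext h)
            omega
          have hv2' : (v : ℕ) < (π x0 : ℕ) := by
            have : (v : ℕ) ≠ (π x0 : ℕ) := fun h => hvne0 (Fin.ext h)
            omega
          have hx1pa : x1 ≠ pa := by
            intro h
            have := congrArg Fin.val h
            omega
          have hx1min := hmin x1 hx1pa
          rcases lt_trichotomy (i : ℕ) (pa : ℕ) with hc | hc | hc
          · refine h1 (c4231 π x0 x1 i pa (Fin.lt_def.mpr (by omega))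
              (Fin.lt_def.mpr (by omega)) (Fin.lt_def.mpr hc) ?_ ?_ ?_)
            · exact Fin.lt_def.mpr (by omega)
            · rw [hi]; exact Fin.lt_def.mpr (by omega)
            · rw [hi]; exact Fin.lt_def.mpr (by omega)
          · exfalso
            have : π i = π pa := congrArg π (Fin.ext hc)
            rw [hi] at this
            have := congrArg Fin.val this
            omega
          · have hx0pd : x0 ≠ pd := fun h => by
              have := congrArg Fin.val h; omega
            have hx0max := hmax x0 hx0pd
            refine h3 (c42513 π x0 x1 pd pa i (Fin.lt_def.mpr (by omega))
              (Fin.lt_def.mpr (by omega)) hpdpa (Fin.lt_def.mpr hc) ?_ ?_ ?_ ?_)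
            · exact Fin.lt_def.mpr (by omega)
            · rw [hi]; exact Fin.lt_def.mpr (by omega)
            · rw [hi]; exact Fin.lt_def.mpr (by omega)
            · exact Fin.lt_def.mpr (by omega)
      · rintro ⟨i, hki, hix1, rfl⟩
        have hkiN := Fin.le_def.mp hki
        have hix1N := Fin.le_def.mp hix1
        rcases eq_or_lt_of_le hix1N with h | h
        · have : i = x1 := Fin.ext (by omega)
          subst this
          exact ⟨le_rfl, hdesc.le⟩
        · have hiM : (i : ℕ) ≤ m := by omega
          constructor
          · -- π x1 ≤ π i
            rcases eq_or_lt_of_le hkiN with h' | h'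
            · have : i = k := Fin.ext (by omega)
              subst this
              exact hk1.le
            · exact (hk1.trans (mono (i : ℕ) hiM k i h' rfl)).le
          · -- π i ≤ π x0
            rcases eq_or_lt_of_le hiM with h' | h'
            · have : i = x0 := Fin.ext (by omega)
              subst this
              exact le_rfl
            · exact (mono m le_rfl i x0 (by omega) hx0).le
    rcases hblocks k x1 (Fin.le_def.mpr (by omega)) hblock with heq | ⟨hk0, hxN⟩
    · have := congrArg Fin.val heq
      omega
    · omega
  -- Part A
  have hA : ∀ i j : Fin n, i < j → j ≤ pd → π i < π j := by
    have chain : ∀ jj : ℕ, jj ≤ (pd : ℕ) → ∀ u v : Fin n, (v : ℕ) = jj →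
        (u : ℕ) < jj → π u < π v := by
      intro jj
      induction jj with
      | zero => intro _ u v _ h; omega
      | succ jj ihj =>
        intro hjj u v hv hu
        have step : ∀ w : Fin n, (w : ℕ) = jj → π w < π v :=
          fun w hw => adjA jj w v hw (by omega) (by omega)
        rcases Nat.lt_succ_iff_lt_or_eq.mp hu with h | h
        · exact (ihj (by omega) u ⟨jj, by omega⟩ rfl h).trans (step ⟨jj, by omega⟩ rfl)
        · exact step u h
    intro i j hij hjpd
    exact chain (j : ℕ) (Fin.le_def.mp hjpd) i j rfl (Fin.lt_def.mp hij)
  -- Part C adjacency, by downward induction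
  have adjC : ∀ t : ℕ, ∀ m : ℕ, ∀ x0 x1 : Fin n, (x0 : ℕ) = m → (x1 : ℕ) = m + 1 →
      (pa : ℕ) ≤ m → m + 1 < n → n - m ≤ t → π x0 < π x1 := by
    intro t
    induction t with
    | zero => intro m x0 x1 _ _ _ hm1 hcnt; omega
    | succ t iht =>
    intro m x0 x1 hx0 hx1 hpam hm1 hcnt
    by_contra hcon
    push_neg at hcon
    have hne : π x1 ≠ π x0 := by
      intro h
      have := congrArg Fin.val (hinj h)
      omega
    have hdesc : π x1 < π x0 := lt_of_le_of_ne hcon hne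
    have hdescN : (π x1 : ℕ) < (π x0 : ℕ) := Fin.lt_def.mp hdesc
    have hpam' : (pa : ℕ) < m := by
      rcases eq_or_lt_of_le hpam with h | h
      · exfalso
        have hq : x0 = pa := Fin.ext (by omega)
        have : (π x0 : ℕ) = 0 := by rw [hq]; exact hpa
        omega
      · exact h
    -- monotone on [m+1, n-1]
    have monoC : ∀ y : ℕ, y < n → ∀ u v : Fin n, (v : ℕ) = y → m + 1 ≤ (u : ℕ) →
        (u : ℕ) < y → π u < π v := by
      intro y
      induction y with
      | zero => intro _ u v _ _ h; omega
      | succ y ihy =>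
        intro hy u v hv hu huv
        have step : ∀ w : Fin n, (w : ℕ) = y → π w < π v :=
          fun w hw => iht y w v hw (by omega) (by omega) (by omega) (by omega)
        rcases Nat.lt_succ_iff_lt_or_eq.mp huv with h | h
        · exact (ihy (by omega) u ⟨y, by omega⟩ rfl hu h).trans (step ⟨y, by omega⟩ rfl)
        · exact step u h
    -- the maximum of positions with value below π x0
    have hSne : (Finset.univ.filter (fun i : Fin n => π i < π x0)).Nonempty :=
      ⟨x1, Finset.mem_filter.mpr ⟨Finset.mem_univ _, hdesc⟩⟩
    obtain ⟨k, hkS, hkmax0⟩ :=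
      Finset.exists_max_image (Finset.univ.filter (fun i : Fin n => π i < π x0)) id hSne
    have hk1 : π k < π x0 := (Finset.mem_filter.mp hkS).2
    have hkmax : ∀ i : Fin n, π i < π x0 → (i : ℕ) ≤ (k : ℕ) := fun i hi =>
      Fin.le_def.mp (hkmax0 i (Finset.mem_filter.mpr ⟨Finset.mem_univ _, hi⟩))
    have hkx1 : (x1 : ℕ) ≤ (k : ℕ) := hkmax x1 hdesc
    have hblock : IsBlock π x0 k := by
      refine ⟨π x1, π x0, fun v => ⟨?_, ?_⟩⟩
      · rintro ⟨hv1, hv2⟩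
        have hv1N := Fin.le_def.mp hv1
        have hv2N := Fin.le_def.mp hv2
        obtain ⟨i, hi⟩ : ∃ i, π i = v := hπ.surjective v
        refine ⟨i, ?_, ?_, hi⟩
        · -- x0 ≤ i
          rw [Fin.le_def]
          by_contra hix
          push_neg at hix
          have hixN : (i : ℕ) < m := by omega
          have hvne0 : v ≠ π x0 := by
            intro h
            have := congrArg Fin.val (hinj (hi.trans h))
            omega
          have hvne1 : v ≠ π x1 := by
            intro h
            have := congrArg Fin.val (hinj (hi.trans h))
            omega
          have hv1' : (π x1 : ℕ) < (v : ℕ) := by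
            have : (v : ℕ) ≠ (π x1 : ℕ) := fun h => hvne1 (Fin.ext h)
            omega
          have hv2' : (v : ℕ) < (π x0 : ℕ) := by
            have : (v : ℕ) ≠ (π x0 : ℕ) := fun h => hvne0 (Fin.ext h)
            omega
          have hx1pa : x1 ≠ pa := by
            intro h
            have := congrArg Fin.val h
            omega
          have hx1min := hmin x1 hx1pa
          have hx0pd : x0 ≠ pd := fun h => by
            have := congrArg Fin.val h; omega
          have hx0max := hmax x0 hx0pd
          rcases lt_trichotomy (i : ℕ) (pd : ℕ) with hc | hc | hc
          · refine h2 (c35142 π i pd pa x0 x1 (Fin.lt_def.mpr hc) hpdpa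
              (Fin.lt_def.mpr (by omega)) (Fin.lt_def.mpr (by omega)) ?_ ?_ ?_ ?_)
            · exact Fin.lt_def.mpr (by omega)
            · rw [hi]; exact Fin.lt_def.mpr (by omega)
            · rw [hi]; exact Fin.lt_def.mpr (by omega)
            · exact Fin.lt_def.mpr (by omega)
          · exfalso
            have : π i = π pd := congrArg π (Fin.ext hc)
            rw [hi] at this
            have := congrArg Fin.val this
            omega
          · refine h1 (c4231 π pd i x0 x1 (Fin.lt_def.mpr hc)
              (Fin.lt_def.mpr (by omega)) (Fin.lt_def.mpr (by omega)) ?_ ?_ ?_)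
            · rw [hi]; exact Fin.lt_def.mpr (by omega)
            · rw [hi]; exact Fin.lt_def.mpr (by omega)
            · exact Fin.lt_def.mpr (by omega)
        · -- i ≤ k
          rw [Fin.le_def]
          by_contra hik
          push_neg at hik
          have h2' : ¬ (π i < π x0) := fun h => absurd (hkmax i h) (by omega)
          have h3' : (π x0 : ℕ) ≤ (π i : ℕ) := by
            rcases lt_or_ge (π i) (π x0) with h | h
            · exact absurd h h2'
            · exact Fin.le_def.mp h
          have h4 : π i = π x0 := Fin.ext (by rw [hi] at h3' ⊢; omega)
          have h5 := congrArg Fin.val (hinj h4)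
          omega
      · rintro ⟨i, hx0i, hik, rfl⟩
        have hx0iN := Fin.le_def.mp hx0i
        have hikN := Fin.le_def.mp hik
        rcases eq_or_lt_of_le hx0iN with h | h
        · have : i = x0 := Fin.ext (by omega)
          subst this
          exact ⟨hdesc.le, le_rfl⟩
        · have hiM : m + 1 ≤ (i : ℕ) := by omega
          constructor
          · -- π x1 ≤ π i
            rcases eq_or_lt_of_le hiM with h' | h'
            · have : i = x1 := Fin.ext (by omega)
              subst this
              exact le_rfl
            · exact (monoC (i : ℕ) i.isLt x1 i rfl (by omega) (by omega)).le
          · -- π i ≤ π x0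
            rcases eq_or_lt_of_le hikN with h' | h'
            · have : i = k := Fin.ext (by omega)
              subst this
              exact hk1.le
            · exact ((monoC (k : ℕ) k.isLt i k rfl hiM h').trans hk1).le
    rcases hblocks x0 k (Fin.le_def.mpr (by omega)) hblock with heq | ⟨hk0, hxN⟩
    · have := congrArg Fin.val heq
      omega
    · omega
  -- Part C
  have hC : ∀ i j : Fin n, pa ≤ i → i < j → π i < π j := by
    have chain : ∀ jj : ℕ, jj < n → ∀ u v : Fin n, (v : ℕ) = jj →
        (pa : ℕ) ≤ (u : ℕ) → (u : ℕ) < jj → π u < π v := by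
      intro jj
      induction jj with
      | zero => intro _ u v _ _ h; omega
      | succ jj ihj =>
        intro hjj u v hv hpau hu
        have step : ∀ w : Fin n, (w : ℕ) = jj → (pa : ℕ) ≤ jj → π w < π v :=
          fun w hw hpw => adjC n jj w v hw (by omega) hpw (by omega) (by omega)
        rcases Nat.lt_succ_iff_lt_or_eq.mp hu with h | h
        · exact (ihj (by omega) u ⟨jj, by omega⟩ rfl hpau h).trans
            (step ⟨jj, by omega⟩ rfl (by omega))
        · exact step u h (by omega)
    intro i j hpai hij
    exact chain (j : ℕ) j.isLt i j rfl (Fin.le_def.mp hpai) (Fin.lt_def.mp hij)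
  exact ⟨hA, hB, hC⟩
end

section
/- Let π be a simple permutation and let d₁ = π(1), and recursively d_i = the right-most value smaller than d_{i-1} (when i is even) or the greatest value positioned to the left of d_{i-1} (when i is odd). Then the values d_i are pairwise distinct for as long as they are defined (i.e., d_i ≠ d_j for i ≠ j, until the sequence terminates at the last value and maximum of π). -/
/-- Let `π` be a simple permutation of length `n ≥ 4` in
`Av(4231, 35142, 42513, 351624)` with `π(2) ≠ 1`, and let `d 1 = π(1)` and,
recursively, `d i` be the right-most value smaller than `d (i-1)` when `i` is even,
and the greatest value positioned to the left of `d (i-1)` when `i` is odd, the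
sequence terminating (at index `M`) once it reaches the pair consisting of the
greatest value and the last value of `π`.  Then `d i ≤ d (i+2)`, the positions of
the `d i` are likewise monotone two apart, and the `d i` are pairwise distinct. -/
theorem stmt14 (n : ℕ) (hn : 4 ≤ n) (π : Fin n → Fin n) (hπ : Function.Bijective π)
    (hs : IsSimple π)
    (h1 : Avoids π (![3, 1, 2, 0] : Fin 4 → Fin 4))
    (h2 : Avoids π (![2, 4, 0, 3, 1] : Fin 5 → Fin 5))
    (h3 : Avoids π (![3, 1, 4, 0, 2] : Fin 5 → Fin 5))
    (h4 : Avoids π (![2, 4, 0, 5, 1, 3] : Fin 6 → Fin 6))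
    (hπ2 : (π ⟨1, by omega⟩ : ℕ) ≠ 0)
    (M : ℕ) (hM : 1 ≤ M) (d : ℕ → Fin n)
    (hd1 : d 1 = π ⟨0, by omega⟩)
    (hdeven : ∀ i, 2 ≤ i → i ≤ M → i % 2 = 0 →
      ∃ s : Fin n, π s < d (i - 1) ∧ (∀ s' : Fin n, π s' < d (i - 1) → s' ≤ s) ∧ d i = π s)
    (hdodd : ∀ i, 2 ≤ i → i ≤ M → i % 2 = 1 →
      (∃ p q : Fin n, π p = d i ∧ π q = d (i - 1) ∧ p < q) ∧
      (∀ t : Fin n, (∃ p q : Fin n, π p = t ∧ π q = d (i - 1) ∧ p < q) → t ≤ d i))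
    (htermMax : ∀ i, 1 ≤ i → i ≤ M → (d i : ℕ) = n - 1 → M ≤ i + 1)
    (htermLast : ∀ i, 1 ≤ i → i ≤ M → d i = π ⟨n - 1, by omega⟩ → M ≤ i + 1) :
    (∀ i, 1 ≤ i → i + 2 ≤ M → d i ≤ d (i + 2)) ∧
    (∀ i, 1 ≤ i → i + 2 ≤ M → ∀ p q : Fin n, π p = d i → π q = d (i + 2) → p ≤ q) ∧
    (∀ i j, 1 ≤ i → i < j → j ≤ M → d i ≠ d j) := by
  classical
  have hinj : Function.Injective π := hπ.1
  obtain ⟨inv, hinv⟩ : ∃ g : Fin n → Fin n, ∀ v, π (g v) = v :=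
    ⟨fun v => (hπ.2 v).choose, fun v => (hπ.2 v).choose_spec⟩
  set P : ℕ → Fin n := fun i => inv (d i) with hPdef
  have hP : ∀ i, π (P i) = d i := fun i => hinv (d i)
  have huniq : ∀ (a : Fin n) (i : ℕ), π a = d i → a = P i :=
    fun a i h => hinj (h.trans (hP i).symm)
  have hdP : ∀ i j : ℕ, d i = d j → P i = P j := fun i j h => by
    simp only [hPdef, h]
  -- structured even facts
  have heven : ∀ i, 2 ≤ i → i ≤ M → i % 2 = 0 →
      d i < d (i - 1) ∧ (∀ s : Fin n, π s < d (i - 1) → s ≤ P i) := by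
    intro i h2 hiM hpar
    obtain ⟨s, hs1, hs2, hs3⟩ := hdeven i h2 hiM hpar
    have hsP : s = P i := huniq s i hs3.symm
    exact ⟨hs3 ▸ hs1, hsP ▸ hs2⟩
  -- structured odd facts
  have hodd : ∀ i, 2 ≤ i → i ≤ M → i % 2 = 1 →
      P i < P (i - 1) ∧ (∀ s : Fin n, s < P (i - 1) → π s ≤ d i) := by
    intro i h2 hiM hpar
    obtain ⟨⟨p, q, hp, hq, hpq⟩, hmax⟩ := hdodd i h2 hiM hpar
    have hpP : p = P i := huniq p i hp
    have hqP : q = P (i - 1) := huniq q (i - 1) hq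
    refine ⟨hpP ▸ hqP ▸ hpq, fun s hss => ?_⟩
    exact hmax (π s) ⟨s, P (i - 1), rfl, hP _, hss⟩
  have hP1 : P 1 = ⟨0, by omega⟩ := (huniq ⟨0, by omega⟩ 1 hd1.symm).symm
  have htop : ∀ x : Fin n, (x : ℕ) ≤ n - 1 := fun x => by omega
  have hdne : ∀ i j : ℕ, d i < d j → P i ≠ P j := by
    intro i j hij heq
    have : d i = d j := by rw [← hP i, ← hP j, heq]
    exact absurd (this ▸ hij) (lt_irrefl _)
  -- block/simplicity helper
  have hblock : ∀ (x b : Fin n), (∀ s : Fin n, s ≤ x ↔ π s ≤ b) →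
      (x : ℕ) = 0 ∨ ((x : ℕ) = n - 1 ∧ (b : ℕ) = n - 1) := by
    intro x b H
    have blk : IsBlock π ⟨0, by omega⟩ x := by
      refine ⟨⟨0, by omega⟩, b, fun v => ⟨fun hv => ?_, fun hv => ?_⟩⟩
      · exact ⟨inv v, by simp [Fin.le_def], (H (inv v)).2 (by rw [hinv]; exact hv.2),
          hinv v⟩
      · obtain ⟨j, _, hj2, hj3⟩ := hv
        exact ⟨by simp [Fin.le_def], hj3 ▸ (H j).1 hj2⟩
    rcases hs.2 ⟨0, by omega⟩ x (by simp [Fin.le_def]) blk with h | ⟨_, hxn⟩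
    · left
      have : (x : ℕ) = ((⟨0, by omega⟩ : Fin n) : ℕ) := by rw [← h]
      simpa using this
    · right
      refine ⟨hxn, le_antisymm (htop b) ?_⟩
      have h1 : π (inv ⟨n - 1, by omega⟩) ≤ b :=
        (H _).1 (by have := htop (inv ⟨n - 1, by omega⟩); rw [Fin.le_def]; omega)
      rw [hinv] at h1
      exact h1
  -- Lemma A : interleaving of positions, odd i
  have hA : ∀ i, i % 2 = 1 → 1 ≤ i → i + 1 ≤ M → P i < P (i + 1) := by
    intro i hpar h1 hiM
    have he := heven (i + 1) (by omega) hiM (by omega)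
    rw [Nat.add_sub_cancel] at he
    rcases eq_or_lt_of_le h1 with h1' | h3
    · -- i = 1
      subst h1'
      rw [hP1]
      refine lt_of_le_of_ne (by simp [Fin.le_def]) ?_
      intro h0
      exact hdne 2 1 he.1 (by rw [← h0, hP1])
    · -- 3 ≤ i
      by_contra hcon
      push_neg at hcon
      have hlt : P (i + 1) < P i := lt_of_le_of_ne hcon (hdne (i + 1) i he.1)
      have ho := hodd i (by omega) (by omega) hpar
      have H : ∀ s : Fin n, s ≤ P i ↔ π s ≤ d i := by
        intro s
        constructor
        · intro hsle
          rcases eq_or_lt_of_le hsle with h | h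
          · exact le_of_eq (by rw [h, hP])
          · exact ho.2 s (lt_trans h ho.1)
        · intro hsle
          rcases eq_or_lt_of_le hsle with h | h
          · exact le_of_eq (huniq s i h)
          · exact le_of_lt (lt_of_le_of_lt (he.2 s h) hlt)
      rcases hblock (P i) (d i) H with h0 | ⟨hn1, _⟩
      · rw [Fin.lt_def] at hlt; omega
      · have hx := ho.1
        have hy := htop (P (i - 1))
        rw [Fin.lt_def] at hx
        omega
  -- Lemma B : odd step-up
  have hB : ∀ i, i % 2 = 1 → 1 ≤ i → i + 2 ≤ M → d i < d (i + 2) ∧ P i ≤ P (i + 2) := by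
    intro i hpar h1 hiM
    have hAi : P i < P (i + 1) := hA i hpar h1 (by omega)
    have ho2 := hodd (i + 2) (by omega) hiM (by omega)
    rw [show i + 2 - 1 = i + 1 from rfl] at ho2
    have he := heven (i + 1) (by omega) (by omega) (by omega)
    rw [Nat.add_sub_cancel] at he
    have hle : d i ≤ d (i + 2) := by
      have := ho2.2 (P i) hAi
      rwa [hP] at this
    have hstrict : d i < d (i + 2) := by
      rcases lt_or_eq_of_le hle with h | h
      · exact h
      · -- equality case: build a block and derive a contradiction
        exfalso
        have hPP : P (i + 2) = P i := hdP (i + 2) i h.symm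
        have H : ∀ s : Fin n, s ≤ P (i + 1) ↔ π s ≤ d i := by
          intro s
          constructor
          · intro hsle
            rcases eq_or_lt_of_le hsle with hh | hh
            · rw [hh, hP]; exact le_of_lt he.1
            · have := ho2.2 s hh
              rwa [← h] at this
          · intro hsle
            rcases eq_or_lt_of_le hsle with hh | hh
            · exact le_of_lt ((huniq s i hh) ▸ hAi)
            · exact he.2 s hh
        rcases hblock (P (i + 1)) (d i) H with h0 | ⟨_, hn1⟩
        · rw [Fin.lt_def] at hAi; omega
        · have := htermMax i h1 (by omega) hn1
          omega
    refine ⟨hstrict, ?_⟩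
    rcases eq_or_lt_of_le h1 with h1' | h3
    · rw [← h1', hP1]; simp [Fin.le_def]
    · have ho := hodd i (by omega) (by omega) hpar
      by_contra hcon
      push_neg at hcon
      have : π (P (i + 2)) ≤ d i := ho.2 (P (i + 2)) (lt_trans hcon ho.1)
      rw [hP] at this
      exact absurd hstrict (not_lt_of_ge this)
  -- cross lemma : even i, d i < d (i+1)
  have hCross : ∀ i, i % 2 = 0 → 2 ≤ i → i + 1 ≤ M → d i < d (i + 1) := by
    intro i hpar h2 hiM
    have hAi : P (i - 1) < P i := by
      have := hA (i - 1) (by omega) (by omega) (by omega)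
      rwa [show i - 1 + 1 = i by omega] at this
    have ho1 := hodd (i + 1) (by omega) hiM (by omega)
    rw [Nat.add_sub_cancel] at ho1
    have he := heven i h2 (by omega) hpar
    have hd1' : d (i - 1) ≤ d (i + 1) := by
      have := ho1.2 (P (i - 1)) hAi
      rwa [hP] at this
    exact lt_of_lt_of_le he.1 hd1'
  -- Lemma C : even step-up
  have hC : ∀ i, i % 2 = 0 → 2 ≤ i → i + 2 ≤ M → d i < d (i + 2) ∧ P i ≤ P (i + 2) := by
    intro i hpar h2 hiM
    have hcross := hCross i hpar h2 (by omega)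
    have ho1 := hodd (i + 1) (by omega) (by omega) (by omega)
    rw [Nat.add_sub_cancel] at ho1
    have he := heven i h2 (by omega) hpar
    have he2 := heven (i + 2) (by omega) hiM (by omega)
    rw [show i + 2 - 1 = i + 1 from rfl] at he2
    have hPle : P i ≤ P (i + 2) := he2.2 (P i) (by rw [hP]; exact hcross)
    refine ⟨?_, hPle⟩
    rcases lt_or_eq_of_le hPle with hPlt | hPeq
    · -- strictly to the right: value jumps above d (i-1)
      have : ¬ π (P (i + 2)) < d (i - 1) := by
        intro hcon
        exact absurd (he.2 _ hcon) (not_le_of_gt hPlt)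
      rw [hP] at this
      exact lt_of_lt_of_le he.1 (le_of_not_gt this)
    · -- equal positions: block contradiction
      exfalso
      have hdeq : d (i + 2) = d i := by rw [← hP (i + 2), ← hP i, hPeq]
      have H : ∀ s : Fin n, s ≤ P i ↔ π s ≤ d (i + 1) := by
        intro s
        constructor
        · intro hsle
          rcases eq_or_lt_of_le hsle with hh | hh
          · rw [hh, hP]; exact le_of_lt hcross
          · exact ho1.2 s hh
        · intro hsle
          rcases eq_or_lt_of_le hsle with hh | hh
          · exact le_of_lt ((huniq s (i + 1) hh) ▸ ho1.1)
          · have := he2.2 s hh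
            rwa [← hPeq] at this
      rcases hblock (P i) (d (i + 1)) H with h0 | ⟨hn1, _⟩
      · have := ho1.1; rw [Fin.lt_def] at this; omega
      · have hlast : d i = π ⟨n - 1, by omega⟩ := by
          rw [← hP i]
          congr 1
          exact Fin.ext hn1
        have := htermLast i (by omega) (by omega) hlast
        omega
  -- step lemma combining parities
  have hstep : ∀ i, 1 ≤ i → i + 2 ≤ M → d i < d (i + 2) ∧ P i ≤ P (i + 2) := by
    intro i h1 hiM
    rcases Nat.even_or_odd i with hev | hod
    · have hev2 := Nat.even_iff.1 hev
      exact hC i hev2 (by omega) hiM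
    · exact hB i (Nat.odd_iff.1 hod) h1 hiM
  -- chain lemma
  have hchain : ∀ k i, 1 ≤ i → i + 2 * k ≤ M →
      (d i ≤ d (i + 2 * k) ∧ P i ≤ P (i + 2 * k)) ∧ (1 ≤ k → d i < d (i + 2 * k)) := by
    intro k
    induction k with
    | zero => intro i _ _; simp
    | succ m ih =>
      intro i h1 hiM
      have hs1 := hstep i h1 (by omega)
      have ih2 := ih (i + 2) (by omega) (by omega)
      rw [show i + 2 + 2 * m = i + 2 * (m + 1) by ring] at ih2
      exact ⟨⟨le_trans (le_of_lt hs1.1) ih2.1.1, le_trans hs1.2 ih2.1.2⟩,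
        fun _ => lt_of_lt_of_le hs1.1 ih2.1.1⟩
  refine ⟨fun i h1 hiM => le_of_lt (hstep i h1 hiM).1,
    fun i h1 hiM p q hp hq => ?_, fun i j h1 hij hjM => ?_⟩
  · rw [huniq p i hp, huniq q (i + 2) hq]
    exact (hstep i h1 hiM).2
  · -- distinctness
    rcases Nat.even_or_odd i with hie | hio
    · have hi2 : 2 ≤ i := by
        have := Nat.even_iff.1 hie; omega
      rcases Nat.even_or_odd j with hje | hjo
      · -- both even: strict value chain
        obtain ⟨k, hk⟩ : ∃ k, j = i + 2 * k := by
          have h2 := Nat.even_iff.1 hie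
          have h3 := Nat.even_iff.1 hje
          exact ⟨(j - i) / 2, by omega⟩
        subst hk
        exact ne_of_lt ((hchain k i (by omega) hjM).2 (by omega))
      · -- i even, j odd : d i < d (i+1) ≤ d j
        have hc := hCross i (Nat.even_iff.1 hie) hi2 (by omega)
        obtain ⟨k, hk⟩ : ∃ k, j = (i + 1) + 2 * k := by
          have h2 := Nat.even_iff.1 hie
          have h3 := Nat.odd_iff.1 hjo
          exact ⟨(j - (i + 1)) / 2, by omega⟩
        subst hk
        exact ne_of_lt (lt_of_lt_of_le hc (hchain k (i + 1) (by omega) hjM).1.1)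
    · rcases Nat.even_or_odd j with hje | hjo
      · -- i odd, j even : positions P i < P (i+1) ≤ P j
        have hAi : P i < P (i + 1) := hA i (Nat.odd_iff.1 hio) h1 (by omega)
        obtain ⟨k, hk⟩ : ∃ k, j = (i + 1) + 2 * k := by
          have h2 := Nat.odd_iff.1 hio
          have h3 := Nat.even_iff.1 hje
          exact ⟨(j - (i + 1)) / 2, by omega⟩
        subst hk
        have hPj : P (i + 1) ≤ P ((i + 1) + 2 * k) :=
          (hchain k (i + 1) (by omega) hjM).1.2
        intro hdij
        exact absurd (hdP i _ hdij) (ne_of_lt (lt_of_lt_of_le hAi hPj))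
      · -- both odd
        obtain ⟨k, hk⟩ : ∃ k, j = i + 2 * k := by
          have h2 := Nat.odd_iff.1 hio
          have h3 := Nat.odd_iff.1 hjo
          exact ⟨(j - i) / 2, by omega⟩
        subst hk
        exact ne_of_lt ((hchain k i h1 hjM).2 (by omega))
end
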